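/- arXiv:1906.08966 — 3 statements merged into one kernel-verified Lean document; each statement's English description precedes it below -/
import Mathlib

section
/- Let ρ ∈ [0,1) and A > 0, and set ζ_{n,ρ} := (ln 2) 2^{−(n+ρ)} k(2^{n+ρ}) / γ(2^{n+ρ+1}). Then there exists a unique family (a_n)_{n∈ℤ} of positive, bounded real numbers solving the recurrence a_{n+1} = ζ_{n,ρ} a_n² for all n ∈ ℤ which satisfies the asymptotics a_n = a_{−∞}(2^{n} + A₀ 2^{2n}) + o(2^{2n}) as n → −∞ for some constant A₀ uniquely determined by A, and a_n / (a_{∞} 2^{(β−α)n} e^{−A 2^{n}}) → 1 as n → +∞, where a_{−∞} := γ₀ 2^{ρ+1}/(k₀ ln 2) and a_{∞} := (ln 2)^{−1} 2^{β} 2^{(β−α)(ρ+1)}. -/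
open Real MeasureTheory Filter Topology Asymptotics

noncomputable section

/-- The assumptions on the coagulation rate function `k` and the fragmentation
rate function `γ`, together with all the fixed structural constants. -/
structure Kernels where
  (α αb k₀ k₁ k₂ β βt βb γ₀ γ₁ γ₂ : ℝ)
  (k γ : ℝ → ℝ)
  hα : 0 < α ∧ α < 1
  hαb : 1 < αb
  hk₀ : 0 < k₀
  hk₁ : 0 < k₁
  hk₂ : 0 < k₂
  hβ : 1 < β ∧ β < 2
  hβt : βt < β
  hβb : 1 < βb
  hγ₀ : 0 < γ₀
  hγ₁ : 0 < γ₁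
  hγ₂ : 0 < γ₂
  hkC2 : ContDiffOn ℝ 2 k (Set.Ioi 0)
  hkpos : ∀ ξ : ℝ, 0 < ξ → 0 < k ξ
  hkInfty : Tendsto (fun ξ : ℝ => k ξ / ξ ^ (α + 1)) atTop (𝓝 1)
  hkZero : (fun ξ : ℝ => k ξ - k₀) =O[𝓝[>] (0:ℝ)] fun ξ : ℝ => ξ ^ αb
  hk'ge : ∀ ξ : ℝ, 1 ≤ ξ → |deriv k ξ| ≤ k₁ * ξ ^ α
  hk'le : ∀ ξ : ℝ, 0 < ξ → ξ ≤ 1 → |deriv k ξ| ≤ k₁ * ξ ^ (αb - 1)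
  hk''ge : ∀ ξ : ℝ, 1 ≤ ξ → |deriv (deriv k) ξ| ≤ k₂ * ξ ^ (α - 1)
  hk''le : ∀ ξ : ℝ, 0 < ξ → ξ ≤ 1 → |deriv (deriv k) ξ| ≤ k₂ * ξ ^ (αb - 2)
  hγC2 : ContDiffOn ℝ 2 γ (Set.Ioi 0)
  hγpos : ∀ ξ : ℝ, 0 < ξ → 0 < γ ξ
  hγInfty : (fun ξ : ℝ => γ ξ - ξ ^ β) =O[atTop] fun ξ : ℝ => ξ ^ βt
  hγZero : (fun ξ : ℝ => γ ξ - γ₀) =O[𝓝[>] (0:ℝ)] fun ξ : ℝ => ξ ^ βb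
  hγ'ge : ∀ ξ : ℝ, 1 ≤ ξ → |deriv γ ξ| ≤ γ₁ * ξ ^ (β - 1)
  hγ'le : ∀ ξ : ℝ, 0 < ξ → ξ ≤ 1 → |deriv γ ξ| ≤ γ₁ * ξ ^ (βb - 1)
  hγ''ge : ∀ ξ : ℝ, 1 ≤ ξ → |deriv (deriv γ) ξ| ≤ γ₂ * ξ ^ (β - 2)
  hγ''le : ∀ ξ : ℝ, 0 < ξ → ξ ≤ 1 → |deriv (deriv γ) ξ| ≤ γ₂ * ξ ^ (βb - 2)

/-- `ζ_n(p) = ln 2 · 2^{-(n+p_n)} k(2^{n+p_n}) / γ(2^{n+1+p_{n+1}})`. -/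
def Kernels.zeta (KD : Kernels) (p : ℤ → ℝ) (n : ℤ) : ℝ :=
  Real.log 2 * (2:ℝ) ^ (-((n:ℝ) + p n)) * KD.k ((2:ℝ) ^ ((n:ℝ) + p n)) /
    KD.γ ((2:ℝ) ^ ((n:ℝ) + 1 + p (n + 1)))

/-- `ζ_{n,ρ}` for a constant shift `ρ`. -/
def Kernels.zetaRho (KD : Kernels) (ρ : ℝ) (n : ℤ) : ℝ := KD.zeta (fun _ => ρ) n

/-- `θ_n(p) = 2 ζ_{n+1}(p)/ζ_n(p)`. -/
def Kernels.thetaSeq (KD : Kernels) (p : ℤ → ℝ) (n : ℤ) : ℝ :=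
  2 * KD.zeta p (n + 1) / KD.zeta p n

/-- `μ̄_n(A,p) = e^{-A 2^n} exp(-2^n Σ_{j=n+1}^∞ 2^{-j} ln θ_{j-1}(p))`. -/
def Kernels.mubar (KD : Kernels) (A : ℝ) (p : ℤ → ℝ) (n : ℤ) : ℝ :=
  Real.exp (-A * (2:ℝ) ^ (n:ℝ)) *
    Real.exp (-((2:ℝ) ^ (n:ℝ)) *
      ∑' j : ℕ, (2:ℝ) ^ (-((n:ℝ) + 1 + (j:ℝ))) * Real.log (KD.thetaSeq p (n + (j:ℤ))))

/-- `m̄_n(A,p) = 2 μ̄_n(A,p) / ζ_n(p)`. -/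
def Kernels.mbar (KD : Kernels) (A : ℝ) (p : ℤ → ℝ) (n : ℤ) : ℝ :=
  2 * KD.mubar A p n / KD.zeta p n

/-- The weighted norm `‖y‖_θ = sup_{n≤0} 2^n |y_n| + sup_{n>0} 2^{θ n} |y_n|`,
valued in `ℝ≥0∞` so that membership in `𝒴_θ` is expressed by `Ynorm θ y < ⊤`. -/
def Ynorm (θ : ℝ) (y : ℤ → ℝ) : ENNReal :=
  (⨆ n : {m : ℤ // m ≤ 0}, ENNReal.ofReal ((2:ℝ) ^ ((n.1 : ℝ)) * |y n.1|)) +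
    ⨆ n : {m : ℤ // 0 < m}, ENNReal.ofReal ((2:ℝ) ^ (θ * (n.1 : ℝ)) * |y n.1|)

/-- Discrete derivative `D⁺_n(y) = y_{n+1} - y_n`. -/
def Dplus (y : ℤ → ℝ) (n : ℤ) : ℝ := y (n + 1) - y n

/-- Admissible test functions: continuous, finite limit at `-∞`, and `φ(x) ≤ C 2^x`
for large `x`. -/
def TestFun (φ : ℝ → ℝ) : Prop :=
  Continuous φ ∧ (∃ L : ℝ, Tendsto φ atBot (𝓝 L)) ∧
    ∃ C x₀ : ℝ, ∀ x : ℝ, x₀ ≤ x → φ x ≤ C * (2:ℝ) ^ x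

/-- Right-hand side of the weak formulation of the coagulation–fragmentation
equation in logarithmic variables, for a kernel `Kl` (in logarithmic variables)
and a fragmentation rate `gam`. -/
def weakRHS (Kl : ℝ → ℝ → ℝ) (gam : ℝ → ℝ) (μ : Measure ℝ) (φ : ℝ → ℝ) : ℝ :=
  Real.log 2 / 2 *
      ∫ y, ∫ z, Kl y z * (φ (Real.logb 2 ((2:ℝ) ^ y + (2:ℝ) ^ z)) - φ y - φ z) ∂μ ∂μ -
    1 / 4 * ∫ y, gam ((2:ℝ) ^ y) * (φ y - 2 * φ (y - 1)) ∂μ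

/-- Weak solution of the coagulation–fragmentation equation in logarithmic
variables on the time set `S`, with initial datum `g₀`. -/
def IsWeakSolutionOn (β : ℝ) (Kl : ℝ → ℝ → ℝ) (gam : ℝ → ℝ) (S : Set ℝ)
    (g₀ : Measure ℝ) (g : ℝ → Measure ℝ) : Prop :=
  g 0 = g₀ ∧
  (∀ t ∈ S, ∫⁻ x, ENNReal.ofReal (1 + (2:ℝ) ^ ((β + 1) * x)) ∂(g t) < ⊤) ∧
  (∀ φ : ℝ → ℝ, TestFun φ → ContinuousOn (fun t => ∫ x, φ x ∂(g t)) S) ∧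
  ∀ φ : ℝ → ℝ, TestFun φ → ∀ t ∈ S,
    HasDerivWithinAt (fun s => ∫ x, φ x ∂(g s)) (weakRHS Kl gam (g t) φ) S t

/-- The structural assumptions on the cut-off `Q` and the full coagulation kernel. -/
structure CoagData extends Kernels where
  Q : ℝ → ℝ
  hQC2 : ContDiff ℝ 2 Q
  hQ0 : ∀ x, 0 ≤ Q x
  hQ1 : Q 0 = 1
  hQeven : ∀ x, Q (-x) = Q x
  hQsupp : Function.support Q ⊆ Set.Ioo (-(1/3) : ℝ) (1/3)

/-- The coagulation kernel `K(ξ,η) = (ξ+η)⁻¹ k((ξ+η)/2) Q(2η/(ξ+η) - 1)`. -/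
def CoagData.K (S : CoagData) (ξ η : ℝ) : ℝ :=
  (ξ + η)⁻¹ * S.k ((ξ + η) / 2) * S.Q (2 * η / (ξ + η) - 1)

/-- The coagulation kernel in logarithmic variables, `K(2^y, 2^z)`. -/
def CoagData.Klog (S : CoagData) (y z : ℝ) : ℝ := S.K ((2:ℝ) ^ y) ((2:ℝ) ^ z)

/-- Truncated coagulation kernel in logarithmic variables:
`K_N(2^y,2^z) = K(2^y,2^z) 1_{y < N - 1/2}`. -/
def CoagData.KlogN (S : CoagData) (N : ℕ) (y z : ℝ) : ℝ :=
  if y < (N:ℝ) - 1/2 then S.Klog y z else 0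

/-- Truncated fragmentation rate: `γ_N(ξ) = γ(ξ) 1_{ξ < 2^{N+1/2}}`. -/
def Kernels.gammaTrunc (KD : Kernels) (N : ℕ) (ξ : ℝ) : ℝ :=
  if ξ < (2:ℝ) ^ ((N:ℝ) + 1/2) then KD.γ ξ else 0

/-- `m_n(t)` : the mass of the measure in the interval `I_n = (n-δ₀, n+δ₀)`. -/
def mIn (δ₀ : ℝ) (μ : Measure ℝ) (n : ℤ) : ℝ :=
  (μ (Set.Ioo ((n:ℝ) - δ₀) ((n:ℝ) + δ₀))).toReal

/-- `p_n(t)` : normalized first moment of the measure around the peak `n`. -/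
def pIn (δ₀ : ℝ) (μ : Measure ℝ) (n : ℤ) : ℝ :=
  (mIn δ₀ μ n)⁻¹ * ∫ x in Set.Ioo ((n:ℝ) - δ₀) ((n:ℝ) + δ₀), (x - (n:ℝ)) ∂μ

/-- `q_n(t)` : normalized second moment of the measure around the peak `n`. -/
def qIn (δ₀ : ℝ) (μ : Measure ℝ) (n : ℤ) : ℝ :=
  (mIn δ₀ μ n)⁻¹ *
    ∫ x in Set.Ioo ((n:ℝ) - δ₀) ((n:ℝ) + δ₀), (x - (n:ℝ) - pIn δ₀ μ n) ^ 2 ∂μ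

/-- `m_n⁰ = μ([n-1/2, n+1/2))`. -/
def mhalf (μ : Measure ℝ) (n : ℤ) : ℝ :=
  (μ (Set.Ico ((n:ℝ) - 1/2) ((n:ℝ) + 1/2))).toReal

/-- `p_n⁰ = (m_n⁰)⁻¹ ∫_{[n-1/2,n+1/2)} (x-n) dμ`. -/
def phalf (μ : Measure ℝ) (n : ℤ) : ℝ :=
  (mhalf μ n)⁻¹ * ∫ x in Set.Ico ((n:ℝ) - 1/2) ((n:ℝ) + 1/2), (x - (n:ℝ)) ∂μ

/-- The measure is supported in `∪_{n∈ℤ} (n-δ₀, n+δ₀)`. -/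
def suppInPeaks (δ₀ : ℝ) (μ : Measure ℝ) : Prop :=
  μ ((⋃ n : ℤ, Set.Ioo ((n:ℝ) - δ₀) ((n:ℝ) + δ₀))ᶜ) = 0

/-- Characterization of the stationary peak coefficients `a_n(A,ρ)`:
positive, bounded, solving the recurrence `a_{n+1} = ζ_{n,ρ} a_n²`, with
`a_n = O(2^n)` as `n → -∞` and `a_n = O(2^{(β-α)n} e^{-A 2^n})` as `n → ∞`. -/
def IsStationaryFamily (KD : Kernels) (A ρ : ℝ) (a : ℤ → ℝ) : Prop :=
  (∀ n, 0 < a n) ∧ (∃ B : ℝ, ∀ n, a n ≤ B) ∧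
  (∀ n : ℤ, a (n + 1) = KD.zetaRho ρ n * a n ^ 2) ∧
  ((fun n : ℤ => a n) =O[atBot] fun n : ℤ => (2:ℝ) ^ (n:ℝ)) ∧
  ((fun n : ℤ => a n) =O[atTop]
    fun n : ℤ => (2:ℝ) ^ ((KD.β - KD.α) * (n:ℝ)) * Real.exp (-A * (2:ℝ) ^ (n:ℝ)))

/-- Hypothesis (⋆) on a time-dependent shift sequence `p(t)` with derivative `p'`. -/
def StarHyp (KD : Kernels) (θb₁ η₀ ν : ℝ) (p p' : ℝ → ℤ → ℝ) : Prop :=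
  (∀ t : ℝ, 0 < t → ∀ n : ℤ, |p t n| ≤ η₀) ∧
  (∀ t : ℝ, 0 < t → ∀ n : ℤ, HasDerivAt (fun s => p s n) (p' t n) t) ∧
  (∀ t : ℝ, 0 < t →
    Ynorm θb₁ (Dplus (p t)) ≤
      ENNReal.ofReal (η₀ * t ^ (-(θb₁ / KD.β)) * Real.exp (-(ν * t) / 2))) ∧
  (∀ t : ℝ, 0 < t →
    Ynorm (θb₁ - KD.β) (p' t) ≤
      ENNReal.ofReal (η₀ * (1 + t ^ (-(θb₁ / KD.β))) * Real.exp (-(ν * t) / 2)))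

/-- Coefficient `σ_n(t)` of the time-dependent linearized problem. -/
def Kernels.sigmaLin (KD : Kernels) (AM : ℝ) (p : ℝ → ℤ → ℝ) (n : ℤ) (t : ℝ) : ℝ :=
  8 * KD.mubar AM (p t) n * KD.γ ((2:ℝ) ^ ((n:ℝ) + 1 + p t (n + 1))) /
    KD.γ ((2:ℝ) ^ ((n:ℝ) + p t n))

/-- Solution of the time-dependent linearized problem with datum `y0` at time `t₀`. -/
def IsLinSol (KD : Kernels) (AM : ℝ) (p : ℝ → ℤ → ℝ) (θ t₀ : ℝ)
    (y0 : ℤ → ℝ) (y : ℝ → ℤ → ℝ) : Prop :=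
  y t₀ = y0 ∧ (∀ t ∈ Set.Ici t₀, Ynorm θ (y t) < ⊤) ∧
    ∀ t ∈ Set.Ici t₀, ∀ n : ℤ,
      HasDerivWithinAt (fun s => y s n)
        (KD.γ ((2:ℝ) ^ ((n:ℝ) + p t n)) / 4 *
          (y t (n - 1) - y t n - KD.sigmaLin AM p n t * (y t n - y t (n + 1))))
        (Set.Ici t₀) t

/-- Coefficient `σ^N_n(t)` of the truncated time-dependent linearized problem. -/
def Kernels.sigmaLinT (KD : Kernels) (AM : ℝ) (N : ℤ) (p : ℝ → ℤ → ℝ) (n : ℤ) (t : ℝ) : ℝ :=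
  if n < N then KD.sigmaLin AM p n t else 0

/-- Solution of the truncated time-dependent linearized problem. -/
def IsLinSolTrunc (KD : Kernels) (AM : ℝ) (N : ℤ) (p : ℝ → ℤ → ℝ) (θ t₀ : ℝ)
    (y0 : ℤ → ℝ) (y : ℝ → ℤ → ℝ) : Prop :=
  y t₀ = y0 ∧ (∀ t ∈ Set.Ici t₀, Ynorm θ (y t) < ⊤) ∧
    (∀ t ∈ Set.Ici t₀, ∀ n : ℤ, N < n → y t n = 0) ∧
    ∀ t ∈ Set.Ici t₀, ∀ n : ℤ, n ≤ N →
      HasDerivWithinAt (fun s => y s n)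
        (KD.γ ((2:ℝ) ^ ((n:ℝ) + p t n)) / 4 *
          (y t (n - 1) - y t n - KD.sigmaLinT AM N p n t * (y t n - y t (n + 1))))
        (Set.Ici t₀) t

/-- `‖g₀‖ = sup_{n<0} 2^{-n} g₀([n,n+1)) + g₀([0,∞))`, valued in `ℝ≥0∞`. -/
def gnorm (μ : Measure ℝ) : ENNReal :=
  (⨆ n : {m : ℤ // m < 0},
      ENNReal.ofReal ((2:ℝ) ^ (-(n.1 : ℝ))) * μ (Set.Ico ((n.1 : ℝ)) ((n.1 : ℝ) + 1))) +
    μ (Set.Ici (0:ℝ))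

/-!
Writing `a n = exp (b n)` turns the recurrence into the linear recurrence
`b (n + 1) = 2 b n + L n`, `L n = log ζ_{n,ρ}`, whose solutions are `b n = -A 2^n - T n`
(`A ∈ ℝ`) with the particular solution `T n = ∑_{m ≥ 0} 2^{-(m+1)} L (n + m)`.
As `n → ∞`, `L` is affine up to `o(1)` (because `k ξ ~ ξ^{α+1}` and `γ ξ ~ ξ^β`), and
averaging an affine function against the weights `2^{-(m+1)}` just shifts it by one step;
this gives the asymptotics `a∞ 2^{(β-α)n} e^{-A 2^n}`. As `n → -∞`, `L` is affine up to
`O(2^{e n})` with `e = min ᾱ β̄ > 1`, so `T n` is affine up to `2^n U n` where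
`U (n + 1) - U n = O(2^{(e-1) n})`; hence `U` converges to some `S`, and expanding the
exponential gives `A₀ = -(A + S)`. Uniqueness: the logarithm of the ratio of two solutions
doubles at each step, so it vanishes if the ratio tends to `1` at `+∞`.
-/

def dyadicSum (f : ℤ → ℝ) (n : ℤ) : ℝ := ∑' m : ℕ, (2:ℝ)⁻¹ ^ (m + 1) * f (n + m)

def DyadicSummable (f : ℤ → ℝ) : Prop :=
  ∀ n : ℤ, Summable fun m : ℕ => (2:ℝ)⁻¹ ^ (m + 1) * f (n + m)

lemma hasSum_inv_two_pow_succ : HasSum (fun m : ℕ => (2:ℝ)⁻¹ ^ (m + 1)) 1 := by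
  simpa [pow_succ, div_eq_mul_inv, mul_comm] using hasSum_geometric_two' 1

lemma hasSum_natCast_mul_inv_two_pow_succ :
    HasSum (fun m : ℕ => (m : ℝ) * (2:ℝ)⁻¹ ^ (m + 1)) 1 := by
  have h := (hasSum_coe_mul_geometric_of_norm_lt_one
    (show ‖(2:ℝ)⁻¹‖ < 1 by norm_num)).mul_right 2⁻¹
  rw [show (2:ℝ)⁻¹ / (1 - 2⁻¹) ^ 2 * 2⁻¹ = 1 by norm_num] at h
  exact h.congr_fun fun m => by ring

lemma hasSum_dyadic_affine_add {f : ℤ → ℝ} (hf : DyadicSummable f) (c d : ℝ) (n : ℤ) :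
    HasSum (fun m : ℕ => (2:ℝ)⁻¹ ^ (m + 1) * (c + d * ((n + m : ℤ) : ℝ) + f (n + m)))
      (c + d * ((n:ℝ) + 1) + dyadicSum f n) := by
  have h := ((hasSum_inv_two_pow_succ.mul_left (c + d * n)).add
    (hasSum_natCast_mul_inv_two_pow_succ.mul_left d)).add (hf n).hasSum
  rw [show c + d * ((n:ℝ) + 1) + dyadicSum f n = (c + d * n) * 1 + d * 1 + dyadicSum f n by ring]
  exact h.congr_fun fun m => by push_cast; ring

lemma DyadicSummable.affine_add {f g : ℤ → ℝ} {c d : ℝ} (hg : DyadicSummable g)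
    (hfg : ∀ j, f j = c + d * j + g j) : DyadicSummable f := fun n =>
  (hasSum_dyadic_affine_add hg c d n).summable.congr fun m => by rw [hfg]

lemma DyadicSummable.of_affine_add {f g : ℤ → ℝ} {c d : ℝ} (hf : DyadicSummable f)
    (hfg : ∀ j, f j = c + d * j + g j) : DyadicSummable g :=
  hf.affine_add (c := -c) (d := -d) fun j => by rw [hfg]; ring

lemma dyadicSum_eq_affine_add {f g : ℤ → ℝ} {c d : ℝ} (hg : DyadicSummable g)
    (hfg : ∀ j, f j = c + d * j + g j) (n : ℤ) :
    dyadicSum f n = c + d * ((n:ℝ) + 1) + dyadicSum g n := by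
  simp only [dyadicSum, hfg]
  exact (hasSum_dyadic_affine_add hg c d n).tsum_eq

lemma dyadicSum_succ {f : ℤ → ℝ} (hf : DyadicSummable f) (n : ℤ) :
    dyadicSum f (n + 1) = 2 * dyadicSum f n - f n := by
  have h := (hf n).tsum_eq_zero_add
  simp only [dyadicSum] at h ⊢
  rw [h]
  have hshift (m : ℕ) : (2:ℝ)⁻¹ ^ (m + 1 + 1) * f (n + (m + 1 : ℕ)) =
      2⁻¹ * ((2:ℝ)⁻¹ ^ (m + 1) * f (n + 1 + m)) := by
    rw [show n + ((m + 1 : ℕ) : ℤ) = n + 1 + m by push_cast; ring]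
    ring
  simp only [hshift, tsum_mul_left, Nat.cast_zero, add_zero, zero_add, pow_one]
  ring

lemma dyadicSummable_of_tendsto {f : ℤ → ℝ} (hf : Tendsto f atTop (𝓝 0)) :
    DyadicSummable f := by
  intro n
  have hshift : Tendsto (fun m : ℕ => f (n + m)) atTop (𝓝 0) :=
    hf.comp (tendsto_atTop_add_const_left _ n tendsto_natCast_atTop_atTop)
  refine summable_of_isBigO_nat (hasSum_inv_two_pow_succ.summable) ?_
  simpa using (isBigO_refl (fun m : ℕ => (2:ℝ)⁻¹ ^ (m + 1)) atTop).mul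
    (hshift.isBigO_one (F := ℝ))

lemma tendsto_dyadicSum {f : ℤ → ℝ} (hf : Tendsto f atTop (𝓝 0)) :
    Tendsto (dyadicSum f) atTop (𝓝 0) := by
  obtain ⟨N, hN⟩ := eventually_atTop.1 (hf.eventually (Metric.closedBall_mem_nhds 0 one_pos))
  have hterm (m : ℕ) :
      Tendsto (fun n : ℤ => (2:ℝ)⁻¹ ^ (m + 1) * f (n + m)) atTop (𝓝 0) := by
    simpa using (hf.comp (tendsto_atTop_add_const_right _ (m:ℤ) tendsto_id)).const_mul
      ((2:ℝ)⁻¹ ^ (m + 1))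
  have hbound : ∀ᶠ n : ℤ in atTop, ∀ m : ℕ,
      ‖(2:ℝ)⁻¹ ^ (m + 1) * f (n + m)‖ ≤ (2:ℝ)⁻¹ ^ (m + 1) :=
    eventually_atTop.2 ⟨N, fun n hn m => by
      have hf1 : ‖f (n + m)‖ ≤ 1 := by simpa using hN (n + m) (by omega)
      simpa [norm_mul] using
        mul_le_mul_of_nonneg_left hf1 (by positivity : (0:ℝ) ≤ 2⁻¹ ^ (m + 1))⟩
  have h := tendsto_tsum_of_dominated_convergence hasSum_inv_two_pow_succ.summable hterm hbound
  rwa [tsum_zero] at h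

lemma tendsto_two_rpow_intCast_add_atTop (c : ℝ) :
    Tendsto (fun n : ℤ => (2:ℝ) ^ ((n:ℝ) + c)) atTop atTop :=
  (tendsto_rpow_atTop_of_base_gt_one 2 one_lt_two).comp
    (tendsto_atTop_add_const_right _ c tendsto_intCast_atTop_atTop)

lemma tendsto_two_rpow_intCast_atBot : Tendsto (fun n : ℤ => (2:ℝ) ^ (n:ℝ)) atBot (𝓝 0) :=
  (tendsto_rpow_atBot_of_base_gt_one 2 one_lt_two).comp (tendsto_intCast_atBot_iff.2 tendsto_id)

lemma tendsto_two_rpow_intCast_add_atBot (c : ℝ) :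
    Tendsto (fun n : ℤ => (2:ℝ) ^ ((n:ℝ) + c)) atBot (𝓝[>] 0) :=
  tendsto_nhdsWithin_iff.2
    ⟨(tendsto_rpow_atBot_of_base_gt_one 2 one_lt_two).comp
      (tendsto_atBot_add_const_right _ c (tendsto_intCast_atBot_iff.2 tendsto_id)),
    Eventually.of_forall fun _ => Real.rpow_pos_of_pos two_pos _⟩

lemma isBigO_two_rpow_intCast_add_rpow_atBot {c p e : ℝ} (hep : e ≤ p) :
    (fun n : ℤ => ((2:ℝ) ^ ((n:ℝ) + c)) ^ p) =O[atBot] fun n : ℤ => (2:ℝ) ^ (e * n) := by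
  refine IsBigO.of_bound ((2:ℝ) ^ (p * c)) ?_
  filter_upwards [eventually_le_atBot 0] with n hn
  have hn' : (n:ℝ) ≤ 0 := by exact_mod_cast hn
  rw [Real.norm_of_nonneg (by positivity), Real.norm_of_nonneg (by positivity),
    ← Real.rpow_mul zero_le_two]
  calc (2:ℝ) ^ (((n:ℝ) + c) * p) = (2:ℝ) ^ (p * c) * (2:ℝ) ^ (p * n) := by
        rw [← Real.rpow_add two_pos]; ring_nf
    _ ≤ (2:ℝ) ^ (p * c) * (2:ℝ) ^ (e * n) :=
        mul_le_mul_of_nonneg_left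
          (Real.rpow_le_rpow_of_exponent_le one_le_two (by nlinarith)) (by positivity)

lemma isBigO_log_sub_log_nhdsGT {f : ℝ → ℝ} {f₀ p : ℝ} (hf₀ : 0 < f₀) (hp : 0 < p)
    (h : (fun ξ => f ξ - f₀) =O[𝓝[>] 0] fun ξ => ξ ^ p) :
    (fun ξ => Real.log (f ξ) - Real.log f₀) =O[𝓝[>] 0] fun ξ => ξ ^ p := by
  have hpow : Tendsto (fun ξ : ℝ => ξ ^ p) (𝓝[>] 0) (𝓝 0) := by
    have := (Real.continuousAt_rpow_const 0 p (Or.inr hp.le)).tendsto.mono_left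
      (nhdsWithin_le_nhds (s := Set.Ioi 0))
    rwa [Real.zero_rpow hp.ne'] at this
  have hlim : Tendsto f (𝓝[>] 0) (𝓝 f₀) := by
    simpa using (h.trans_tendsto hpow).add_const f₀
  exact ((Real.hasDerivAt_log hf₀.ne').isBigO_sub.comp_tendsto hlim).trans h

lemma tendsto_div_rpow_of_isBigO {f : ℝ → ℝ} {p q : ℝ} (hqp : q < p)
    (h : (fun ξ => f ξ - ξ ^ p) =O[atTop] fun ξ => ξ ^ q) :
    Tendsto (fun ξ => f ξ / ξ ^ p) atTop (𝓝 1) := by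
  have hrel : (fun ξ => f ξ / ξ ^ p - 1) =O[atTop] fun ξ => ξ ^ (q - p) := by
    refine (h.mul (isBigO_refl (fun ξ : ℝ => (ξ ^ p)⁻¹) atTop)).congr' ?_ ?_
    · filter_upwards [eventually_gt_atTop 0] with ξ hξ
      field_simp [(Real.rpow_pos_of_pos hξ p).ne']
    · filter_upwards [eventually_gt_atTop 0] with ξ hξ
      rw [Real.rpow_sub hξ, div_eq_mul_inv]
  have hdecay : Tendsto (fun ξ : ℝ => ξ ^ (q - p)) atTop (𝓝 0) := by
    simpa using tendsto_rpow_neg_atTop (sub_pos.2 hqp)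
  simpa using (hrel.trans_tendsto hdecay).add_const 1

lemma tendsto_log_sub_mul_log {f : ℝ → ℝ} {p : ℝ}
    (h : Tendsto (fun ξ => f ξ / ξ ^ p) atTop (𝓝 1)) :
    Tendsto (fun ξ => Real.log (f ξ) - p * Real.log ξ) atTop (𝓝 0) := by
  have hlog := (Real.continuousAt_log one_ne_zero).tendsto.comp h
  rw [Real.log_one] at hlog
  refine hlog.congr' ?_
  filter_upwards [eventually_gt_atTop 0, h.eventually_ne one_ne_zero] with ξ hξ hne
  have hf : f ξ ≠ 0 := fun h0 => hne (by simp [h0])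
  simp only [Function.comp_apply]
  rw [Real.log_div hf (Real.rpow_pos_of_pos hξ p).ne', Real.log_rpow hξ]

lemma exists_tendsto_atBot_of_sub_isBigO {u : ℤ → ℝ} {q : ℝ} (hq : 0 < q)
    (h : (fun n => u (n + 1) - u n) =O[atBot] fun n : ℤ => (2:ℝ) ^ (q * n)) :
    ∃ S, Tendsto u atBot (𝓝 S) := by
  set w : ℕ → ℝ := fun k => u (-k)
  have hdown : Tendsto (fun k : ℕ => -(k:ℤ) - 1) atTop atBot :=
    tendsto_atBot_add_const_right _ _ (tendsto_neg_atTop_atBot.comp tendsto_natCast_atTop_atTop)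
  have hgeom : Summable fun k : ℕ => (2:ℝ) ^ (-q) * ((2:ℝ) ^ (-q)) ^ k :=
    (summable_geometric_of_lt_one (by positivity)
      (Real.rpow_lt_one_of_one_lt_of_neg one_lt_two (neg_lt_zero.2 hq))).mul_left _
  have hsum : Summable fun k : ℕ => dist (w k) (w k.succ) := by
    refine summable_of_isBigO_nat hgeom ((h.comp_tendsto hdown).norm_left.congr' ?_ ?_)
    · refine Eventually.of_forall fun k => ?_
      have e1 : -(k:ℤ) - 1 + 1 = -k := by ring
      have e2 : -((k.succ : ℕ) : ℤ) = -k - 1 := by push_cast; ring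
      simp only [Function.comp_apply, w, e1, e2, Real.dist_eq, Real.norm_eq_abs]
    · refine Eventually.of_forall fun k => ?_
      simp only [Function.comp_apply]
      rw [← Real.rpow_natCast, ← Real.rpow_mul zero_le_two, ← Real.rpow_add two_pos]
      push_cast; ring_nf
  obtain ⟨S, hS⟩ := cauchySeq_tendsto_of_complete (cauchySeq_of_summable_dist hsum)
  have htoNat : Tendsto (fun n : ℤ => (-n).toNat) atBot atTop :=
    tendsto_atTop.2 fun b => eventually_atBot.2 ⟨-b, fun n hn => by omega⟩
  refine ⟨S, (hS.comp htoNat).congr' ?_⟩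
  filter_upwards [eventually_le_atBot 0] with n hn
  simp [w, Int.toNat_of_nonneg (neg_nonneg.2 hn)]

lemma isLittleO_mul_exp_sub {ι : Type*} {l : Filter ι} {g c : ι → ℝ} {S : ℝ}
    (hg : Tendsto g l (𝓝 0)) (hc : Tendsto c l (𝓝 S)) :
    (fun i => g i * Real.exp (c i * g i) - (g i + S * g i ^ 2)) =o[l] fun i => g i ^ 2 := by
  have hcg : Tendsto (fun i => c i * g i) l (𝓝 0) := by simpa using hc.mul hg
  have hexp : (fun i => Real.exp (c i * g i) - 1 - c i * g i) =O[l] fun i => g i ^ 2 := by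
    have hquad :
        (fun i => Real.exp (c i * g i) - 1 - c i * g i) =O[l] fun i => (c i * g i) ^ 2 :=
      IsBigO.of_bound 1 <| by
        filter_upwards [hcg.eventually (Metric.closedBall_mem_nhds 0 one_pos)] with i hi
        rw [dist_zero_right, Real.norm_eq_abs] at hi
        rw [one_mul, Real.norm_eq_abs, Real.norm_of_nonneg (sq_nonneg _)]
        exact Real.abs_exp_sub_one_sub_id_le hi
    refine hquad.trans ?_
    simpa [mul_pow] using
      ((hc.pow 2).isBigO_one (F := ℝ)).mul (isBigO_refl (fun i => g i ^ 2) l)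
  have hfirst :
      (fun i => g i * (Real.exp (c i * g i) - 1 - c i * g i)) =o[l] fun i => g i ^ 2 := by
    simpa using ((isLittleO_one_iff ℝ).2 hg).mul_isBigO hexp
  have hsecond : (fun i => (c i - S) * g i ^ 2) =o[l] fun i => g i ^ 2 := by
    simpa using ((isLittleO_one_iff ℝ).2 (by simpa using hc.sub_const S)).mul_isBigO
      (isBigO_refl (fun i => g i ^ 2) l)
  exact (hfirst.add hsecond).congr_left fun i => by ring

lemma eq_of_isLittleO_sub_mul_add_mul {ι : Type*} {l : Filter ι} [l.NeBot] {f g h : ι → ℝ}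
    {C A B : ℝ} (hC : C ≠ 0) (hg : ∀ᶠ i in l, g i ≠ 0)
    (hA : (fun i => f i - C * (h i + A * g i)) =o[l] g)
    (hB : (fun i => f i - C * (h i + B * g i)) =o[l] g) : A = B := by
  by_contra hAB
  have hdiff : (fun i => (C * (A - B)) * g i) =o[l] g :=
    (hB.sub hA).congr_left fun i => by ring
  exact isLittleO_irrefl hg.frequently
    ((isLittleO_const_mul_left_iff (mul_ne_zero hC (sub_ne_zero.2 hAB))).1 hdiff)

lemma eq_zero_of_two_mul_of_tendsto {c : ℤ → ℝ} (hrec : ∀ n, c (n + 1) = 2 * c n)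
    (hlim : Tendsto c atTop (𝓝 0)) : c = 0 := by
  funext n
  have hhalve (m : ℕ) : (2:ℝ)⁻¹ ^ m * c (n + m) = c n := by
    induction m with
    | zero => simp
    | succ m ih =>
      rw [← ih, Nat.cast_succ, ← add_assoc, hrec, pow_succ]
      field_simp
  have hshift : Tendsto (fun m : ℕ => c (n + m)) atTop (𝓝 0) :=
    hlim.comp (tendsto_atTop_add_const_left _ n tendsto_natCast_atTop_atTop)
  have h := (tendsto_pow_atTop_nhds_zero_of_lt_one (by norm_num : (0:ℝ) ≤ 2⁻¹)
    (by norm_num)).mul hshift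
  rw [mul_zero] at h
  exact tendsto_nhds_unique (h.congr hhalve) tendsto_const_nhds |>.symm

lemma eq_of_sq_recurrence {ζ a b : ℤ → ℝ} (hζ : ∀ n, ζ n ≠ 0) (ha : ∀ n, 0 < a n)
    (hb : ∀ n, 0 < b n) (hra : ∀ n, a (n + 1) = ζ n * a n ^ 2)
    (hrb : ∀ n, b (n + 1) = ζ n * b n ^ 2) (hlim : Tendsto (fun n => a n / b n) atTop (𝓝 1)) :
    a = b := by
  have hlog : (fun n => Real.log (a n / b n)) = 0 := by
    refine eq_zero_of_two_mul_of_tendsto (fun n => ?_) ?_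
    · rw [hra, hrb, mul_div_mul_left _ _ (hζ n), ← div_pow, Real.log_pow]
      push_cast; ring
    · simpa [Function.comp_def] using (Real.continuousAt_log one_ne_zero).tendsto.comp hlim
  funext n
  have h1 := Real.eq_one_of_pos_of_log_eq_zero (div_pos (ha n) (hb n)) (congrFun hlog n)
  exact (div_eq_one_iff_eq (hb n).ne').1 h1

namespace Kernels

variable (KD : Kernels) (ρ A : ℝ)

lemma zetaRho_pos (n : ℤ) : 0 < KD.zetaRho ρ n :=
  div_pos (mul_pos (mul_pos (Real.log_pos one_lt_two) (by positivity))
    (KD.hkpos _ (by positivity))) (KD.hγpos _ (by positivity))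

def logZeta (n : ℤ) : ℝ := Real.log (KD.zetaRho ρ n)

lemma logZeta_eq (n : ℤ) :
    KD.logZeta ρ n = Real.log (Real.log 2) - ((n:ℝ) + ρ) * Real.log 2
      + Real.log (KD.k (2 ^ ((n:ℝ) + ρ))) - Real.log (KD.γ (2 ^ ((n:ℝ) + (1 + ρ)))) := by
  have hk := KD.hkpos (2 ^ ((n:ℝ) + ρ)) (by positivity)
  have hγ := KD.hγpos (2 ^ ((n:ℝ) + (1 + ρ))) (by positivity)
  have hlog2 := Real.log_pos one_lt_two
  rw [logZeta, zetaRho, zeta, add_assoc (n:ℝ) 1 ρ, Real.log_div (by positivity) hγ.ne',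
    Real.log_mul (by positivity) hk.ne', Real.log_mul hlog2.ne' (by positivity),
    Real.log_rpow two_pos]
  ring

def logZetaErrTop (n : ℤ) : ℝ :=
  KD.logZeta ρ n - (Real.log (Real.log 2) + (KD.α * ρ - KD.β * (1 + ρ)) * Real.log 2
    + (KD.α - KD.β) * Real.log 2 * n)

def logZetaErrBot (n : ℤ) : ℝ :=
  KD.logZeta ρ n - (Real.log (Real.log 2 * KD.k₀ / KD.γ₀) - ρ * Real.log 2 + -Real.log 2 * n)

lemma tendsto_logZetaErrTop : Tendsto (KD.logZetaErrTop ρ) atTop (𝓝 0) := by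
  have hk := (tendsto_log_sub_mul_log KD.hkInfty).comp (tendsto_two_rpow_intCast_add_atTop ρ)
  have hγ := (tendsto_log_sub_mul_log (tendsto_div_rpow_of_isBigO KD.hβt KD.hγInfty)).comp
    (tendsto_two_rpow_intCast_add_atTop (1 + ρ))
  have h := hk.sub hγ
  rw [sub_zero] at h
  refine h.congr fun n => ?_
  simp only [Function.comp_apply, Real.log_rpow two_pos, logZetaErrTop, logZeta_eq]
  ring

lemma isBigO_logZetaErrBot :
    ∃ e > (1:ℝ), KD.logZetaErrBot ρ =O[atBot] fun n : ℤ => (2:ℝ) ^ (e * n) := by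
  have hk := (isBigO_log_sub_log_nhdsGT KD.hk₀ (by linarith [KD.hαb]) KD.hkZero).comp_tendsto
    (tendsto_two_rpow_intCast_add_atBot ρ)
  have hγ := (isBigO_log_sub_log_nhdsGT KD.hγ₀ (by linarith [KD.hβb]) KD.hγZero).comp_tendsto
    (tendsto_two_rpow_intCast_add_atBot (1 + ρ))
  refine ⟨min KD.αb KD.βb, lt_min KD.hαb KD.hβb, ?_⟩
  refine ((hk.trans (isBigO_two_rpow_intCast_add_rpow_atBot (min_le_left _ _))).sub
    (hγ.trans (isBigO_two_rpow_intCast_add_rpow_atBot (min_le_right _ _)))).congr_left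
    fun n => ?_
  have hlog2 := Real.log_pos one_lt_two
  simp only [Function.comp_apply, logZetaErrBot, logZeta_eq,
    Real.log_div (mul_pos hlog2 KD.hk₀).ne' KD.hγ₀.ne', Real.log_mul hlog2.ne' KD.hk₀.ne']
  ring

lemma logZeta_eq_top (n : ℤ) : KD.logZeta ρ n =
    Real.log (Real.log 2) + (KD.α * ρ - KD.β * (1 + ρ)) * Real.log 2
      + (KD.α - KD.β) * Real.log 2 * n + KD.logZetaErrTop ρ n := by
  rw [logZetaErrTop]; ring

lemma logZeta_eq_bot (n : ℤ) : KD.logZeta ρ n =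
    Real.log (Real.log 2 * KD.k₀ / KD.γ₀) - ρ * Real.log 2 + -Real.log 2 * n
      + KD.logZetaErrBot ρ n := by
  rw [logZetaErrBot]; ring

lemma dyadicSummable_logZetaErrTop : DyadicSummable (KD.logZetaErrTop ρ) :=
  dyadicSummable_of_tendsto (KD.tendsto_logZetaErrTop ρ)

lemma dyadicSummable_logZeta : DyadicSummable (KD.logZeta ρ) :=
  (KD.dyadicSummable_logZetaErrTop ρ).affine_add (KD.logZeta_eq_top ρ)

lemma dyadicSummable_logZetaErrBot : DyadicSummable (KD.logZetaErrBot ρ) :=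
  (KD.dyadicSummable_logZeta ρ).of_affine_add (KD.logZeta_eq_bot ρ)

/-- Equals `∑_{j ≥ n} 2^{-(j+1)} logZetaErrBot ρ j`, a tail of a series that converges
over `ℤ`. -/
def logZetaErrBotTail (n : ℤ) : ℝ := dyadicSum (KD.logZetaErrBot ρ) n / (2:ℝ) ^ (n:ℝ)

lemma exists_tendsto_logZetaErrBotTail :
    ∃ S, Tendsto (KD.logZetaErrBotTail ρ) atBot (𝓝 S) := by
  obtain ⟨e, he, hO⟩ := KD.isBigO_logZetaErrBot ρ
  refine exists_tendsto_atBot_of_sub_isBigO (q := e - 1) (by linarith) ?_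
  refine ((hO.mul (isBigO_refl (fun n : ℤ => -(2:ℝ) ^ (-(n:ℝ) - 1)) atBot)).congr
    (fun n => ?_) (fun n => ?_)).trans (isBigO_const_mul_self (-2⁻¹) _ _)
  · rw [logZetaErrBotTail, logZetaErrBotTail, dyadicSum_succ (KD.dyadicSummable_logZetaErrBot ρ),
      Int.cast_add, Int.cast_one, Real.rpow_add two_pos, Real.rpow_one, Real.rpow_sub two_pos,
      Real.rpow_neg zero_le_two, Real.rpow_one]
    field_simp
    ring
  · rw [mul_neg, ← Real.rpow_add two_pos, show e * (n:ℝ) + (-n - 1) = (e - 1) * n - 1 by ring,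
      Real.rpow_sub two_pos, Real.rpow_one]
    ring

def peakCoeff (n : ℤ) : ℝ := Real.exp (-(A * (2:ℝ) ^ (n:ℝ)) - dyadicSum (KD.logZeta ρ) n)

lemma peakCoeff_pos (n : ℤ) : 0 < KD.peakCoeff ρ A n := Real.exp_pos _

lemma peakCoeff_succ (n : ℤ) :
    KD.peakCoeff ρ A (n + 1) = KD.zetaRho ρ n * KD.peakCoeff ρ A n ^ 2 := by
  rw [peakCoeff, peakCoeff, dyadicSum_succ (KD.dyadicSummable_logZeta ρ), Int.cast_add,
    Int.cast_one, Real.rpow_add two_pos, Real.rpow_one, ← Real.exp_log (KD.zetaRho_pos ρ n), sq,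
    ← Real.exp_add, ← Real.exp_add, ← logZeta]
  ring_nf

lemma peakCoeff_eq_atTop (n : ℤ) : KD.peakCoeff ρ A n =
    (Real.log 2)⁻¹ * (2:ℝ) ^ KD.β * (2:ℝ) ^ ((KD.β - KD.α) * (ρ + 1)) *
      ((2:ℝ) ^ ((KD.β - KD.α) * (n:ℝ)) * Real.exp (-A * (2:ℝ) ^ (n:ℝ))) *
      Real.exp (-dyadicSum (KD.logZetaErrTop ρ) n) := by
  have hinv : (Real.log 2)⁻¹ = Real.exp (-Real.log (Real.log 2)) := by
    rw [Real.exp_neg, Real.exp_log (Real.log_pos one_lt_two)]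
  rw [peakCoeff,
    dyadicSum_eq_affine_add (KD.dyadicSummable_logZetaErrTop ρ) (KD.logZeta_eq_top ρ), hinv]
  simp only [Real.rpow_def_of_pos two_pos, ← Real.exp_add]
  ring_nf

lemma peakCoeff_eq_atBot (n : ℤ) : KD.peakCoeff ρ A n =
    KD.γ₀ * (2:ℝ) ^ (ρ + 1) / (KD.k₀ * Real.log 2) *
      ((2:ℝ) ^ (n:ℝ) * Real.exp (-(A + KD.logZetaErrBotTail ρ n) * (2:ℝ) ^ (n:ℝ))) := by
  have hlog2 := Real.log_pos one_lt_two
  have hexp : -(A + KD.logZetaErrBotTail ρ n) * (2:ℝ) ^ (n:ℝ) =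
      -(A * (2:ℝ) ^ (n:ℝ)) - dyadicSum (KD.logZetaErrBot ρ) n := by
    rw [logZetaErrBotTail]
    field_simp
    ring
  have hconst : KD.γ₀ * (2:ℝ) ^ (ρ + 1) / (KD.k₀ * Real.log 2) = Real.exp
      (Real.log KD.γ₀ + Real.log 2 * (ρ + 1) - Real.log KD.k₀ - Real.log (Real.log 2)) := by
    rw [Real.exp_sub, Real.exp_sub, Real.exp_add, Real.exp_log KD.hγ₀, Real.exp_log KD.hk₀,
      Real.exp_log hlog2, ← Real.rpow_def_of_pos two_pos]
    ring
  rw [peakCoeff, dyadicSum_eq_affine_add (KD.dyadicSummable_logZetaErrBot ρ)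
      (KD.logZeta_eq_bot ρ), hexp, hconst,
    Real.log_div (mul_pos hlog2 KD.hk₀).ne' KD.hγ₀.ne', Real.log_mul hlog2.ne' KD.hk₀.ne']
  simp only [Real.rpow_def_of_pos two_pos, ← Real.exp_add]
  ring_nf

lemma tendsto_peakCoeff_div_atTop :
    Tendsto (fun n : ℤ => KD.peakCoeff ρ A n /
      ((Real.log 2)⁻¹ * (2:ℝ) ^ KD.β * (2:ℝ) ^ ((KD.β - KD.α) * (ρ + 1)) *
        ((2:ℝ) ^ ((KD.β - KD.α) * (n:ℝ)) * Real.exp (-A * (2:ℝ) ^ (n:ℝ)))))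
      atTop (𝓝 1) := by
  have h := (tendsto_dyadicSum (KD.tendsto_logZetaErrTop ρ)).neg.rexp
  rw [neg_zero, Real.exp_zero] at h
  refine h.congr fun n => ?_
  have hlog2 := Real.log_pos one_lt_two
  rw [peakCoeff_eq_atTop, mul_div_cancel_left₀ _ (by positivity)]

lemma tendsto_peakCoeff_atTop (hA : 0 < A) : Tendsto (KD.peakCoeff ρ A) atTop (𝓝 0) := by
  have hdecay := (tendsto_rpow_mul_exp_neg_mul_atTop_nhds_zero (KD.β - KD.α) A hA).comp
    ((tendsto_rpow_atTop_of_base_gt_one 2 one_lt_two).comp tendsto_intCast_atTop_atTop)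
  have h := ((KD.tendsto_peakCoeff_div_atTop ρ A).mul
    (hdecay.const_mul
      ((Real.log 2)⁻¹ * (2:ℝ) ^ KD.β * (2:ℝ) ^ ((KD.β - KD.α) * (ρ + 1)))))
  rw [mul_zero, mul_zero] at h
  refine h.congr fun n => ?_
  have hlog2 := Real.log_pos one_lt_two
  simp only [Function.comp_apply, ← Real.rpow_mul zero_le_two, mul_comm (n:ℝ), neg_mul]
  exact div_mul_cancel₀ _ (by positivity)

lemma tendsto_peakCoeff_atBot {S : ℝ}
    (hS : Tendsto (KD.logZetaErrBotTail ρ) atBot (𝓝 S)) :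
    Tendsto (KD.peakCoeff ρ A) atBot (𝓝 0) := by
  have hexp := (((tendsto_const_nhds (x := A)).add hS).neg.mul tendsto_two_rpow_intCast_atBot).rexp
  have h := (tendsto_two_rpow_intCast_atBot.mul hexp).const_mul
    (KD.γ₀ * (2:ℝ) ^ (ρ + 1) / (KD.k₀ * Real.log 2))
  rw [zero_mul, mul_zero] at h
  exact h.congr fun n => (KD.peakCoeff_eq_atBot ρ A n).symm

lemma isLittleO_peakCoeff_atBot {S : ℝ}
    (hS : Tendsto (KD.logZetaErrBotTail ρ) atBot (𝓝 S)) :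
    (fun n : ℤ => KD.peakCoeff ρ A n - KD.γ₀ * (2:ℝ) ^ (ρ + 1) / (KD.k₀ * Real.log 2) *
        ((2:ℝ) ^ (n:ℝ) + -(A + S) * (2:ℝ) ^ (2 * (n:ℝ))))
      =o[atBot] fun n : ℤ => (2:ℝ) ^ (2 * (n:ℝ)) := by
  have hsq (n : ℤ) : (2:ℝ) ^ (2 * (n:ℝ)) = ((2:ℝ) ^ (n:ℝ)) ^ 2 := by
    rw [mul_comm, Real.rpow_mul zero_le_two, Real.rpow_two]
  simp only [hsq]
  refine ((isLittleO_mul_exp_sub tendsto_two_rpow_intCast_atBot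
    ((tendsto_const_nhds (x := A)).add hS).neg).const_mul_left
    (KD.γ₀ * (2:ℝ) ^ (ρ + 1) / (KD.k₀ * Real.log 2))).congr_left fun n => ?_
  rw [peakCoeff_eq_atBot]
  ring

lemma peakCoeff_bddAbove (hA : 0 < A) : ∃ B, ∀ n, KD.peakCoeff ρ A n ≤ B := by
  obtain ⟨S, hS⟩ := KD.exists_tendsto_logZetaErrBotTail ρ
  have h := (KD.tendsto_peakCoeff_atBot ρ A hS).sup (KD.tendsto_peakCoeff_atTop ρ A hA)
  rw [← Int.cofinite_eq] at h
  obtain ⟨B, hB⟩ := h.bddAbove_range_of_cofinite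
  exact ⟨B, fun n => hB ⟨n, rfl⟩⟩

end Kernels

theorem stationary_peaks_exists_unique_general (KD : Kernels) (ρ A : ℝ)
    (hA : 0 < A) :
    ∃! a : ℤ → ℝ,
      (∀ n, 0 < a n) ∧
      (∃ B : ℝ, ∀ n, a n ≤ B) ∧
      (∀ n : ℤ, a (n + 1) = KD.zetaRho ρ n * a n ^ 2) ∧
      (∃! A₀ : ℝ,
        (fun n : ℤ =>
            a n - KD.γ₀ * (2:ℝ) ^ (ρ + 1) / (KD.k₀ * Real.log 2) *
              ((2:ℝ) ^ (n:ℝ) + A₀ * (2:ℝ) ^ (2 * (n:ℝ)))) =o[atBot]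
          fun n : ℤ => (2:ℝ) ^ (2 * (n:ℝ))) ∧
      Tendsto (fun n : ℤ =>
          a n / ((Real.log 2)⁻¹ * (2:ℝ) ^ KD.β * (2:ℝ) ^ ((KD.β - KD.α) * (ρ + 1)) *
            ((2:ℝ) ^ ((KD.β - KD.α) * (n:ℝ)) * Real.exp (-A * (2:ℝ) ^ (n:ℝ)))))
        atTop (𝓝 1) := by
  obtain ⟨S, hS⟩ := KD.exists_tendsto_logZetaErrBotTail ρ
  have hlog2 := Real.log_pos one_lt_two
  have hlo := KD.isLittleO_peakCoeff_atBot ρ A hS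
  have hlim := KD.tendsto_peakCoeff_div_atTop ρ A
  refine ⟨KD.peakCoeff ρ A, ⟨KD.peakCoeff_pos ρ A, KD.peakCoeff_bddAbove ρ A hA,
    KD.peakCoeff_succ ρ A, ⟨-(A + S), hlo, fun A₀ hA₀ => ?_⟩, hlim⟩, ?_⟩
  · exact eq_of_isLittleO_sub_mul_add_mul (by have := KD.hγ₀; have := KD.hk₀; positivity)
      (Eventually.of_forall fun n => by positivity) hA₀ hlo
  · rintro a ⟨ha, -, hrec, -, ha_lim⟩
    refine eq_of_sq_recurrence (fun n => (KD.zetaRho_pos ρ n).ne') ha (KD.peakCoeff_pos ρ A) hrec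
      (KD.peakCoeff_succ ρ A) ?_
    simpa using (ha_lim.div hlim one_ne_zero).congr fun n =>
      div_div_div_cancel_right₀ (by positivity) _ _

/-- existence and uniqueness of the stationary peak coefficients
`a_n` with prescribed fine asymptotics at `±∞` (Proposition 2.3). -/
theorem stationary_peaks_exists_unique (KD : Kernels) (ρ A : ℝ)
    (hρ : 0 ≤ ρ ∧ ρ < 1) (hA : 0 < A) :
    ∃! a : ℤ → ℝ,
      (∀ n, 0 < a n) ∧
      (∃ B : ℝ, ∀ n, a n ≤ B) ∧
      (∀ n : ℤ, a (n + 1) = KD.zetaRho ρ n * a n ^ 2) ∧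
      (∃! A₀ : ℝ,
        (fun n : ℤ =>
            a n - KD.γ₀ * (2:ℝ) ^ (ρ + 1) / (KD.k₀ * Real.log 2) *
              ((2:ℝ) ^ (n:ℝ) + A₀ * (2:ℝ) ^ (2 * (n:ℝ)))) =o[atBot]
          fun n : ℤ => (2:ℝ) ^ (2 * (n:ℝ))) ∧
      Tendsto (fun n : ℤ =>
          a n / ((Real.log 2)⁻¹ * (2:ℝ) ^ KD.β * (2:ℝ) ^ ((KD.β - KD.α) * (ρ + 1)) *
            ((2:ℝ) ^ ((KD.β - KD.α) * (n:ℝ)) * Real.exp (-A * (2:ℝ) ^ (n:ℝ)))))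
        atTop (𝓝 1) :=
  stationary_peaks_exists_unique_general KD ρ A hA
end
end

section
/- Let A > 0, δ₀ ∈ (0,1), and let p = (p_n)_{n∈ℤ} satisfy |p_n| ≤ δ₀ for all n. Then the series Σ_{j=n+1}^{∞} 2^{−j} ln θ_{j−1}(p) converges absolutely for every n ∈ ℤ, the sequence μ̄_n(A,p) := e^{−A2^{n}} exp(−2^{n} Σ_{j=n+1}^{∞} 2^{−j} ln θ_{j−1}(p)) satisfies μ̄_{n+1}(A,p) = θ_n(p) μ̄_n(A,p)² for all n ∈ ℤ, and the sequence m̄_n(A,p) := 2 μ̄_n(A,p)/ζ_n(p) satisfies m̄_{n+1}(A,p)/m̄_n(A,p) = 2 μ̄_n(A,p) and m̄_{n+1}(A,p) = ζ_n(p) m̄_n(A,p)² for all n ∈ ℤ. -/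
open Real MeasureTheory Filter Topology Asymptotics

noncomputable section

/-!
Since `k` and `γ` grow polynomially at infinity and `p` is bounded, `ln ζ_n = O(n)` and hence
`ln θ_n = O(n)` as `n → ∞`, so the geometric weights `2^{-j}` make the tail series converge
absolutely. Splitting off the first term of the tail, `L_n = 2^{-(n+1)} ln θ_n + L_{n+1}`, turns
the definition of `μ̄` into `μ̄_{n+1} = θ_n μ̄_n²`; the recurrences for `m̄` are then algebra
with `θ_n = 2 ζ_{n+1} / ζ_n`.
-/

lemma tendsto_div_rpow_of_isBigO_sub_rpow {f : ℝ → ℝ} {e e' : ℝ} (he : e' < e)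
    (hf : (fun ξ => f ξ - ξ ^ e) =O[atTop] fun ξ => ξ ^ e') :
    Tendsto (fun ξ => f ξ / ξ ^ e) atTop (𝓝 1) := by
  have hdiv : (fun ξ => f ξ / ξ ^ e - 1) =O[atTop] fun ξ => ξ ^ (e' - e) := by
    refine (hf.mul (isBigO_refl (fun ξ => (ξ ^ e)⁻¹) atTop)).congr' ?_ ?_
    all_goals filter_upwards [eventually_gt_atTop 0] with ξ hξ
    · field_simp [(Real.rpow_pos_of_pos hξ e).ne']
    · rw [Real.rpow_sub hξ, div_eq_mul_inv]
  have hlim : Tendsto (fun ξ : ℝ => ξ ^ (e' - e)) atTop (𝓝 0) := by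
    simpa using tendsto_rpow_neg_atTop (sub_pos.2 he)
  simpa using (hdiv.trans_tendsto hlim).add_const 1

lemma isBigO_log_comp_of_tendsto_div_rpow {f : ℝ → ℝ} {e c : ℝ} (hc : c ≠ 0)
    (hf : Tendsto (fun ξ => f ξ / ξ ^ e) atTop (𝓝 c)) :
    (fun ξ => Real.log (f ξ)) =O[atTop] Real.log := by
  have hlog : Tendsto (fun ξ => Real.log (f ξ / ξ ^ e)) atTop (𝓝 (Real.log c)) :=
    hf.log hc
  have hconst : (fun _ : ℝ => (1 : ℝ)) =O[atTop] Real.log :=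
    ((isLittleO_one_left_iff ℝ).2 (tendsto_norm_atTop_atTop.comp tendsto_log_atTop)).isBigO
  refine ((hlog.isBigO_one ℝ).trans hconst |>.add
    ((isBigO_refl Real.log atTop).const_mul_left e)).congr' ?_ (by rfl)
  filter_upwards [eventually_gt_atTop 0, hf.eventually_ne hc] with ξ hξ hne
  have hpow : ξ ^ e ≠ 0 := (Real.rpow_pos_of_pos hξ e).ne'
  rw [Real.log_div (div_ne_zero_iff.1 hne).1 hpow, Real.log_rpow hξ]
  ring

section IntLinearGrowth

variable {x : ℤ → ℝ} {C : ℝ}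

lemma tendsto_atTop_of_abs_sub_intCast_le (hx : ∀ m, |x m - m| ≤ C) :
    Tendsto x atTop atTop :=
  tendsto_atTop_mono (fun m => by linarith [(abs_le.1 (hx m)).1])
    (tendsto_atTop_add_const_right _ (-C) tendsto_intCast_atTop_atTop)

lemma isBigO_intCast_of_abs_sub_intCast_le (hx : ∀ m, |x m - m| ≤ C) :
    x =O[atTop] fun m : ℤ => (m : ℝ) := by
  refine IsBigO.of_bound (1 + |C|) ?_
  filter_upwards [eventually_ge_atTop 1] with m hm
  have hm' : (1 : ℝ) ≤ m := by exact_mod_cast hm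
  rw [Real.norm_eq_abs, Real.norm_eq_abs, abs_of_pos (by linarith : (0 : ℝ) < m)]
  have hdiff := (abs_sub_abs_le_abs_sub (x m) m).trans (hx m)
  rw [abs_of_pos (by linarith : (0 : ℝ) < m)] at hdiff
  nlinarith [le_abs_self C, abs_nonneg C]

lemma isBigO_const_intCast (c : ℝ) : (fun _ : ℤ => c) =O[atTop] fun m : ℤ => (m : ℝ) :=
  (isLittleO_const_left.2 <| Or.inr <|
    tendsto_norm_atTop_atTop.comp tendsto_intCast_atTop_atTop).isBigO

lemma Asymptotics.IsBigO.comp_add_intCast {u : ℤ → ℝ}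
    (hu : u =O[atTop] fun m : ℤ => (m : ℝ)) (k : ℤ) :
    (fun m => u (m + k)) =O[atTop] fun m : ℤ => (m : ℝ) :=
  (hu.comp_tendsto (tendsto_atTop_add_const_right _ k tendsto_id)).trans <|
    isBigO_intCast_of_abs_sub_intCast_le (C := |(k : ℝ)|) fun m => by simp

lemma isBigO_log_comp_two_rpow {f : ℝ → ℝ} (hf : (fun ξ => Real.log (f ξ)) =O[atTop] Real.log)
    (hx : ∀ m, |x m - m| ≤ C) :
    (fun m => Real.log (f (2 ^ x m))) =O[atTop] fun m : ℤ => (m : ℝ) := by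
  have hpow := (tendsto_rpow_atTop_of_base_gt_one 2 one_lt_two).comp
    (tendsto_atTop_of_abs_sub_intCast_le hx)
  refine (hf.comp_tendsto hpow).trans ?_
  simp only [Function.comp_def, Real.log_rpow two_pos, mul_comm _ (Real.log 2)]
  exact (isBigO_intCast_of_abs_sub_intCast_le hx).const_mul_left _

end IntLinearGrowth

lemma summable_two_rpow_mul_of_isBigO {u : ℤ → ℝ} (hu : u =O[atTop] fun m : ℤ => (m : ℝ))
    (n : ℤ) : Summable fun j : ℕ => (2 : ℝ) ^ (-((n : ℝ) + 1 + j)) * u (n + j) := by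
  have hshift : (fun j : ℕ => u (n + j)) =O[atTop] fun j : ℕ => (j : ℝ) := by
    simpa [Function.comp_def, add_comm] using
      (hu.comp_add_intCast n).comp_tendsto tendsto_natCast_atTop_atTop
  have hgeom : Summable fun j : ℕ => ((1 : ℝ) / 2) ^ j * j := by
    simpa [mul_comm] using summable_pow_mul_geometric_of_norm_lt_one 1
      (r := (1 : ℝ) / 2) (by norm_num)
  refine summable_of_isBigO_nat hgeom ?_
  have hweight (j : ℕ) :
      (2 : ℝ) ^ (-((n : ℝ) + 1 + j)) = 2 ^ (-((n : ℝ) + 1)) * (1 / 2) ^ j := by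
    rw [show -((n : ℝ) + 1 + j) = -((n : ℝ) + 1) + -(j : ℝ) by ring, Real.rpow_add two_pos,
      Real.rpow_neg two_pos.le (j : ℝ), Real.rpow_natCast, one_div, inv_pow]
  simp only [hweight, mul_assoc]
  exact ((isBigO_refl _ _).mul hshift).const_mul_left _

/-- The tail `Σ_{j ≥ n+1} 2^{-j} ln θ_{j-1}`, reindexed from `j = 0`. -/
def tailLogSum (θ : ℤ → ℝ) (n : ℤ) : ℝ :=
  ∑' j : ℕ, (2 : ℝ) ^ (-((n : ℝ) + 1 + j)) * Real.log (θ (n + j))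

lemma tailLogSum_eq_add {θ : ℤ → ℝ} {n : ℤ}
    (hs : Summable fun j : ℕ => (2 : ℝ) ^ (-((n : ℝ) + 1 + j)) * Real.log (θ (n + j))) :
    tailLogSum θ n = 2 ^ (-((n : ℝ) + 1)) * Real.log (θ n) + tailLogSum θ (n + 1) := by
  rw [tailLogSum, hs.tsum_eq_zero_add, tailLogSum]
  congr 1
  · simp
  · refine tsum_congr fun j => ?_
    push_cast
    ring_nf

def mubarOf (A : ℝ) (θ : ℤ → ℝ) (n : ℤ) : ℝ :=
  Real.exp (-A * (2 : ℝ) ^ (n : ℝ)) * Real.exp (-((2 : ℝ) ^ (n : ℝ)) * tailLogSum θ n)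

lemma mubarOf_pos (A : ℝ) (θ : ℤ → ℝ) (n : ℤ) : 0 < mubarOf A θ n := by
  unfold mubarOf; positivity

lemma mubarOf_succ (A : ℝ) {θ : ℤ → ℝ} {n : ℤ} (hθ : 0 < θ n)
    (hs : Summable fun j : ℕ => (2 : ℝ) ^ (-((n : ℝ) + 1 + j)) * Real.log (θ (n + j))) :
    mubarOf A θ (n + 1) = θ n * mubarOf A θ n ^ 2 := by
  have h2n : (2 : ℝ) ^ ((n : ℝ) + 1) = 2 * 2 ^ (n : ℝ) := by
    rw [Real.rpow_add_one two_ne_zero]; ring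
  have hcancel : (2 : ℝ) ^ ((n : ℝ) + 1) * 2 ^ (-((n : ℝ) + 1)) = 1 := by
    rw [← Real.rpow_add two_pos, add_neg_cancel, Real.rpow_zero]
  rw [mubarOf, mubarOf, ← Real.exp_log hθ, tailLogSum_eq_add hs]
  push_cast
  simp only [pow_two, ← Real.exp_add]
  congr 1
  linear_combination (-(A + tailLogSum θ (n + 1) +
    2 ^ (-((n : ℝ) + 1)) * Real.log (θ n))) * h2n + Real.log (θ n) * hcancel

namespace Kernels

variable (KD : Kernels)

lemma zeta_pos (p : ℤ → ℝ) (n : ℤ) : 0 < KD.zeta p n := by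
  have hk := KD.hkpos _ (Real.rpow_pos_of_pos two_pos ((n : ℝ) + p n))
  have hγ := KD.hγpos _ (Real.rpow_pos_of_pos two_pos ((n : ℝ) + 1 + p (n + 1)))
  have hlog2 := Real.log_pos one_lt_two
  unfold zeta
  positivity

lemma thetaSeq_pos (p : ℤ → ℝ) (n : ℤ) : 0 < KD.thetaSeq p n :=
  div_pos (mul_pos two_pos (KD.zeta_pos p (n + 1))) (KD.zeta_pos p n)

lemma log_zeta (p : ℤ → ℝ) (n : ℤ) :
    Real.log (KD.zeta p n) = Real.log (Real.log 2) - Real.log 2 * ((n : ℝ) + p n) +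
      Real.log (KD.k (2 ^ ((n : ℝ) + p n))) -
      Real.log (KD.γ (2 ^ ((n : ℝ) + 1 + p (n + 1)))) := by
  have hk := KD.hkpos _ (Real.rpow_pos_of_pos two_pos ((n : ℝ) + p n))
  have hγ := KD.hγpos _ (Real.rpow_pos_of_pos two_pos ((n : ℝ) + 1 + p (n + 1)))
  rw [zeta, Real.log_div (by positivity) hγ.ne', Real.log_mul (by positivity) hk.ne',
    Real.log_mul (Real.log_pos one_lt_two).ne' (by positivity), Real.log_rpow two_pos]
  ring

lemma isBigO_log_zeta {p : ℤ → ℝ} {δ₀ : ℝ} (hp : ∀ n, |p n| ≤ δ₀) :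
    (fun n => Real.log (KD.zeta p n)) =O[atTop] fun n : ℤ => (n : ℝ) := by
  have hx : ∀ n : ℤ, |((n : ℝ) + p n) - n| ≤ δ₀ := fun n => by simpa using hp n
  have hy : ∀ n : ℤ, |((n : ℝ) + 1 + p (n + 1)) - n| ≤ 1 + δ₀ := fun n => by
    simpa [add_sub_cancel_left, add_assoc] using
      (abs_add_le 1 (p (n + 1))).trans (by simpa using hp (n + 1))
  have hlogk := isBigO_log_comp_of_tendsto_div_rpow one_ne_zero KD.hkInfty
  have hlogγ := isBigO_log_comp_of_tendsto_div_rpow one_ne_zero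
    (tendsto_div_rpow_of_isBigO_sub_rpow KD.hβt KD.hγInfty)
  simp only [KD.log_zeta]
  exact (((isBigO_const_intCast _).sub
    ((isBigO_intCast_of_abs_sub_intCast_le hx).const_mul_left _)).add
    (isBigO_log_comp_two_rpow hlogk hx)).sub (isBigO_log_comp_two_rpow hlogγ hy)

lemma isBigO_log_thetaSeq {p : ℤ → ℝ} {δ₀ : ℝ} (hp : ∀ n, |p n| ≤ δ₀) :
    (fun n => Real.log (KD.thetaSeq p n)) =O[atTop] fun n : ℤ => (n : ℝ) := by
  have hlog : ∀ n, Real.log (KD.thetaSeq p n) =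
      Real.log 2 + Real.log (KD.zeta p (n + 1)) - Real.log (KD.zeta p n) := fun n => by
    rw [thetaSeq, Real.log_div (mul_pos two_pos (KD.zeta_pos p (n + 1))).ne'
      (KD.zeta_pos p n).ne', Real.log_mul two_ne_zero (KD.zeta_pos p (n + 1)).ne']
  simp only [hlog]
  exact ((isBigO_const_intCast _).add ((KD.isBigO_log_zeta hp).comp_add_intCast 1)).sub
    (KD.isBigO_log_zeta hp)

lemma mubar_eq_mubarOf (A : ℝ) (p : ℤ → ℝ) : KD.mubar A p = mubarOf A (KD.thetaSeq p) := rfl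

variable {KD} {A : ℝ} {p : ℤ → ℝ} {n : ℤ}

lemma mbar_succ_div_mbar
    (hrec : KD.mubar A p (n + 1) = KD.thetaSeq p n * KD.mubar A p n ^ 2) :
    KD.mbar A p (n + 1) / KD.mbar A p n = 2 * KD.mubar A p n := by
  have hζ := KD.zeta_pos p n
  have hζ' := KD.zeta_pos p (n + 1)
  have hμ : KD.mubar A p n ≠ 0 := by rw [mubar_eq_mubarOf]; exact (mubarOf_pos A _ n).ne'
  rw [mbar, mbar, hrec, thetaSeq]
  field_simp

lemma mbar_succ (hrec : KD.mubar A p (n + 1) = KD.thetaSeq p n * KD.mubar A p n ^ 2) :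
    KD.mbar A p (n + 1) = KD.zeta p n * KD.mbar A p n ^ 2 := by
  have hζ := KD.zeta_pos p n
  have hζ' := KD.zeta_pos p (n + 1)
  rw [mbar, mbar, hrec, thetaSeq]
  field_simp

end Kernels

theorem mubar_mbar_recurrences_general (KD : Kernels) (A δ₀ : ℝ)
    (p : ℤ → ℝ) (hp : ∀ n, |p n| ≤ δ₀) :
    (∀ n : ℤ, Summable (fun j : ℕ =>
      (2:ℝ) ^ (-((n:ℝ) + 1 + (j:ℝ))) * Real.log (KD.thetaSeq p (n + (j:ℤ))))) ∧
    (∀ n : ℤ, KD.mubar A p (n + 1) = KD.thetaSeq p n * KD.mubar A p n ^ 2) ∧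
    (∀ n : ℤ, KD.mbar A p (n + 1) / KD.mbar A p n = 2 * KD.mubar A p n) ∧
    (∀ n : ℤ, KD.mbar A p (n + 1) = KD.zeta p n * KD.mbar A p n ^ 2) := by
  have hsum := summable_two_rpow_mul_of_isBigO (KD.isBigO_log_thetaSeq hp)
  have hrec : ∀ n : ℤ, KD.mubar A p (n + 1) = KD.thetaSeq p n * KD.mubar A p n ^ 2 :=
    fun n => by simpa only [KD.mubar_eq_mubarOf] using
      mubarOf_succ A (KD.thetaSeq_pos p n) (hsum n)
  exact ⟨hsum, hrec, fun n => Kernels.mbar_succ_div_mbar (hrec n),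
    fun n => Kernels.mbar_succ (hrec n)⟩

/-- absolute convergence of the series defining `μ̄_n(A,p)`, and the
recurrence relations for `μ̄_n` and `m̄_n`. -/
theorem mubar_mbar_recurrences (KD : Kernels) (A δ₀ : ℝ) (hA : 0 < A)
    (hδ : 0 < δ₀ ∧ δ₀ < 1) (p : ℤ → ℝ) (hp : ∀ n, |p n| ≤ δ₀) :
    (∀ n : ℤ, Summable (fun j : ℕ =>
      (2:ℝ) ^ (-((n:ℝ) + 1 + (j:ℝ))) * Real.log (KD.thetaSeq p (n + (j:ℤ))))) ∧
    (∀ n : ℤ, KD.mubar A p (n + 1) = KD.thetaSeq p n * KD.mubar A p n ^ 2) ∧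
    (∀ n : ℤ, KD.mbar A p (n + 1) / KD.mbar A p n = 2 * KD.mubar A p n) ∧
    (∀ n : ℤ, KD.mbar A p (n + 1) = KD.zeta p n * KD.mbar A p n ^ 2) :=
  mubar_mbar_recurrences_general KD A δ₀ p hp
end
end

section
/- Let δ₀ ∈ (0,1) and set c̄ := min{ᾱ, β̄} > 1. Then, uniformly over all sequences p = (p_n)_{n∈ℤ} with |p_n| ≤ δ₀: (i) there is a constant C such that |ζ_n(p) − (k₀ ln 2/γ₀) 2^{−(n+p_n)}| ≤ C 2^{(c̄−1)n} for all n ≤ 0; (ii) ζ_n(p) / ((ln 2) 2^{α(n+p_n)} 2^{−β(n+1+p_{n+1})}) → 1 as n → +∞, uniformly in p; (iii) there is a constant C such that |θ_n(p) − 2^{p_n − p_{n+1}}| ≤ C 2^{c̄ n} for all n ≤ 0; (iv) θ_n(p) / (2^{α−β+1} 2^{α(p_{n+1}−p_n)} 2^{−β(p_{n+2}−p_{n+1})}) → 1 as n → +∞, uniformly in p. -/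
open Real MeasureTheory Filter Topology Asymptotics

noncomputable section

/-!
With `x = n + p_n`, `y = n + 1 + p_{n+1}` one has `ζ_n(p) = ln 2 · 2^{-x} · k(2^x) / γ(2^y)`.
For `n ≤ 0` both `2^x` and `2^y` lie in a bounded interval `(0, M]`, on which `k` and `γ` are
within `O(ξ^ᾱ)`, `O(ξ^β̄)` of `k₀`, `γ₀` and bounded away from `0` (near `0` by the asymptotics,
elsewhere by continuity on a compact set). This gives (i), and (iii) because `θ_n(p)` is
`2^{p_n - p_{n+1}}` times a quotient of two values of `k(2^s)/γ(2^t)`.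
For `n → ∞`, `ζ_n(p) / (ln 2 · 2^{αx} 2^{-βy}) = (k(2^x)/2^{(α+1)x}) · (2^{βy}/γ(2^y)) → 1`,
uniformly in `p` since `x, y ≥ n - δ₀`; (iv) is the quotient of (ii) at `n + 1` and at `n`.
-/

open Set

theorem exists_abs_sub_le_mul_rpow {f : ℝ → ℝ} {f₀ a M : ℝ} (ha : 0 ≤ a)
    (hf : ContinuousOn f (Ioc 0 M))
    (hO : (fun ξ => f ξ - f₀) =O[𝓝[>] 0] fun ξ => ξ ^ a) :
    ∃ C > 0, ∀ ξ ∈ Ioc 0 M, |f ξ - f₀| ≤ C * ξ ^ a := by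
  obtain ⟨C₀, hC₀⟩ := hO.bound
  obtain ⟨δ, hδ, hnear⟩ := (nhdsGT_basis (0 : ℝ)).eventually_iff.mp hC₀
  obtain ⟨B, hB⟩ := isCompact_Icc.exists_bound_of_continuousOn
    ((hf.mono fun ξ hξ => ⟨hδ.trans_le hξ.1, hξ.2⟩).sub (continuousOn_const (c := f₀)))
  refine ⟨max C₀ 0 + |B| / δ ^ a + 1, by positivity, fun ξ hξ => ?_⟩
  have hξa : 0 ≤ ξ ^ a := rpow_nonneg hξ.1.le a
  rcases lt_or_ge ξ δ with hξδ | hδξ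
  · have h := hnear ⟨hξ.1, hξδ⟩
    rw [Real.norm_eq_abs, Real.norm_of_nonneg hξa] at h
    refine h.trans (mul_le_mul_of_nonneg_right ?_ hξa)
    linarith [le_max_left C₀ 0, show 0 ≤ |B| / δ ^ a by positivity]
  · have hδa : 0 < δ ^ a := rpow_pos_of_pos hδ a
    calc |f ξ - f₀| ≤ |B| / δ ^ a * δ ^ a := by
          rw [div_mul_cancel₀ _ hδa.ne']
          exact (hB ξ ⟨hδξ, hξ.2⟩).trans (le_abs_self B)
      _ ≤ |B| / δ ^ a * ξ ^ a := by gcongr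
      _ ≤ (max C₀ 0 + |B| / δ ^ a + 1) * ξ ^ a := by
          gcongr; linarith [le_max_right C₀ 0]

theorem exists_pos_le_of_tendsto {f : ℝ → ℝ} {f₀ M : ℝ} (hf₀ : 0 < f₀)
    (hf : ContinuousOn f (Ioc 0 M)) (hpos : ∀ ξ ∈ Ioc 0 M, 0 < f ξ)
    (hlim : Tendsto f (𝓝[>] 0) (𝓝 f₀)) :
    ∃ c > 0, ∀ ξ ∈ Ioc 0 M, c ≤ f ξ := by
  obtain ⟨δ, hδ, hnear⟩ :=
    (nhdsGT_basis (0 : ℝ)).eventually_iff.mp (hlim.eventually_const_lt (half_lt_self hf₀))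
  have hIcc : Icc δ M ⊆ Ioc 0 M := fun ξ hξ => ⟨hδ.trans_le hξ.1, hξ.2⟩
  obtain ⟨c, hc, hfar⟩ :=
    isCompact_Icc.exists_forall_le' (hf.mono hIcc) fun ξ hξ => hpos ξ (hIcc hξ)
  refine ⟨min (f₀ / 2) c, lt_min (half_pos hf₀) hc, fun ξ hξ => ?_⟩
  rcases lt_or_ge ξ δ with hξδ | hδξ
  · exact (min_le_left _ _).trans (hnear ⟨hξ.1, hξδ⟩).le
  · exact (min_le_right _ _).trans (hfar ξ ⟨hδξ, hξ.2⟩)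

theorem tendsto_nhdsGT_of_isBigO_rpow {f : ℝ → ℝ} {f₀ a : ℝ} (ha : 0 < a)
    (hO : (fun ξ => f ξ - f₀) =O[𝓝[>] 0] fun ξ => ξ ^ a) :
    Tendsto f (𝓝[>] 0) (𝓝 f₀) := by
  have hpow : Tendsto (fun ξ : ℝ => ξ ^ a) (𝓝[>] 0) (𝓝 0) :=
    ((continuous_id.rpow_const fun _ => Or.inr ha.le).tendsto' 0 0
      (zero_rpow ha.ne')).mono_left nhdsWithin_le_nhds
  exact tendsto_sub_nhds_zero_iff.mp (hO.trans_tendsto hpow)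

theorem tendsto_div_rpow_of_isBigO_s4 {g : ℝ → ℝ} {b b' : ℝ} (hb : b' < b)
    (hO : (fun ξ => g ξ - ξ ^ b) =O[atTop] fun ξ => ξ ^ b') :
    Tendsto (fun ξ => g ξ / ξ ^ b) atTop (𝓝 1) := by
  have hdiff : (fun ξ => (g ξ - ξ ^ b) * ξ ^ (-b)) =ᶠ[atTop] fun ξ => g ξ / ξ ^ b - 1 := by
    filter_upwards [eventually_gt_atTop 0] with ξ hξ
    rw [rpow_neg hξ.le, sub_mul, mul_inv_cancel₀ (rpow_pos_of_pos hξ b).ne', div_eq_mul_inv]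
  have hpow : (fun ξ : ℝ => ξ ^ b' * ξ ^ (-b)) =ᶠ[atTop] fun ξ => ξ ^ (-(b - b')) := by
    filter_upwards [eventually_gt_atTop 0] with ξ hξ
    rw [← rpow_add hξ]; ring_nf
  have h := ((hO.mul (isBigO_refl (fun ξ : ℝ => ξ ^ (-b)) atTop)).congr' hdiff hpow).trans_tendsto
    (tendsto_rpow_neg_atTop (sub_pos.mpr hb))
  exact tendsto_sub_nhds_zero_iff.mp h

theorem abs_div_sub_div_le {a b a₀ b₀ εa εb c : ℝ} (hb₀ : 0 < b₀) (hc : 0 < c) (hcb : c ≤ b)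
    (ha : |a - a₀| ≤ εa) (hb : |b - b₀| ≤ εb) :
    |a / b - a₀ / b₀| ≤ (εa + |a₀| / b₀ * εb) / c := by
  have hb0 : 0 < b := hc.trans_le hcb
  have hεa : 0 ≤ εa := (abs_nonneg _).trans ha
  have hεb : 0 ≤ εb := (abs_nonneg _).trans hb
  have key : a / b - a₀ / b₀ = ((a - a₀) - a₀ / b₀ * (b - b₀)) / b := by
    field_simp; ring
  rw [key, abs_div, abs_of_pos hb0]
  calc |(a - a₀) - a₀ / b₀ * (b - b₀)| / b ≤ (εa + |a₀| / b₀ * εb) / b := by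
        gcongr
        refine (abs_sub _ _).trans (add_le_add ha ?_)
        rw [abs_mul, abs_div, abs_of_pos hb₀]
        gcongr
    _ ≤ (εa + |a₀| / b₀ * εb) / c := by gcongr

theorem two_rpow_mul_le {a c d n s : ℝ} (hca : c ≤ a) (ha : 0 ≤ a) (hn : n ≤ 0)
    (hs : s ≤ n + d) : (2 : ℝ) ^ (a * s) ≤ 2 ^ (a * d) * 2 ^ (c * n) := by
  rw [← rpow_add two_pos]
  exact rpow_le_rpow_of_exponent_le one_le_two (by nlinarith)

theorem two_rpow_mem_Ioc {s d : ℝ} (hs : s ≤ d) : (2 : ℝ) ^ s ∈ Ioc 0 (2 ^ d) :=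
  ⟨rpow_pos_of_pos two_pos s, rpow_le_rpow_of_exponent_le one_le_two hs⟩

theorem exists_forall_abs_sub_le_of_tendsto {α : Type*} {B : Set α} {f : ℤ × α → ℝ} {c : ℝ}
    (h : Tendsto f (atTop ×ˢ 𝓟 B) (𝓝 c)) {ε : ℝ} (hε : 0 < ε) :
    ∃ N : ℤ, ∀ a ∈ B, ∀ n, N ≤ n → |f (n, a) - c| ≤ ε := by
  have h' := h.eventually (Metric.closedBall_mem_nhds c hε)
  obtain ⟨N, hN⟩ := eventually_atTop.mp (eventually_prod_principal_iff.mp h')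
  exact ⟨N, fun a ha n hn => hN n hn a ha⟩

-- Convergence along `atTopUniform δ₀` is convergence as `n → ∞`, uniformly over `|p_n| ≤ δ₀`.
def atTopUniform (δ₀ : ℝ) : Filter (ℤ × (ℤ → ℝ)) := atTop ×ˢ 𝓟 {p | ∀ n, |p n| ≤ δ₀}

theorem tendsto_succ_atTopUniform (δ₀ : ℝ) :
    Tendsto (fun q : ℤ × (ℤ → ℝ) => (q.1 + 1, q.2)) (atTopUniform δ₀) (atTopUniform δ₀) :=
  (tendsto_atTop_add_const_right _ 1 tendsto_fst).prodMk tendsto_snd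

theorem tendsto_add_apply_atTopUniform (δ₀ : ℝ) :
    Tendsto (fun q : ℤ × (ℤ → ℝ) => (q.1 : ℝ) + q.2 q.1) (atTopUniform δ₀) atTop := by
  have hshift : ∀ᶠ q : ℤ × (ℤ → ℝ) in atTopUniform δ₀, -δ₀ ≤ q.2 q.1 :=
    eventually_prod_principal_iff.mpr (Eventually.of_forall fun _ _ hp => (abs_le.mp (hp _)).1)
  exact tendsto_atTop_add_right_of_le' _ _ (tendsto_intCast_atTop_atTop.comp tendsto_fst) hshift

theorem tendsto_add_one_add_apply_atTopUniform (δ₀ : ℝ) :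
    Tendsto (fun q : ℤ × (ℤ → ℝ) => (q.1 : ℝ) + 1 + q.2 (q.1 + 1)) (atTopUniform δ₀) atTop := by
  refine ((tendsto_add_apply_atTopUniform δ₀).comp (tendsto_succ_atTopUniform δ₀)).congr
    fun q => ?_
  simp only [Function.comp_apply]
  push_cast
  ring

namespace Kernels

variable (KD : Kernels)

def rateRatio (s t : ℝ) : ℝ := KD.k (2 ^ s) / KD.γ (2 ^ t)

def zetaAsymp (p : ℤ → ℝ) (n : ℤ) : ℝ :=
  Real.log 2 * (2 : ℝ) ^ (KD.α * ((n : ℝ) + p n)) * (2 : ℝ) ^ (-(KD.β * ((n : ℝ) + 1 + p (n + 1))))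

theorem zeta_eq_rateRatio (p : ℤ → ℝ) (n : ℤ) :
    KD.zeta p n = Real.log 2 * 2 ^ (-((n : ℝ) + p n)) *
      KD.rateRatio ((n : ℝ) + p n) ((n : ℝ) + 1 + p (n + 1)) := by
  rw [zeta, rateRatio, mul_div_assoc]

theorem thetaSeq_eq_rateRatio (p : ℤ → ℝ) (n : ℤ) :
    KD.thetaSeq p n = 2 ^ (p n - p (n + 1)) *
      KD.rateRatio ((n : ℝ) + 1 + p (n + 1)) ((n : ℝ) + 2 + p (n + 2)) /
      KD.rateRatio ((n : ℝ) + p n) ((n : ℝ) + 1 + p (n + 1)) := by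
  have hscale : 2 * (2 : ℝ) ^ (-((n : ℝ) + 1 + p (n + 1))) / 2 ^ (-((n : ℝ) + p n)) =
      2 ^ (p n - p (n + 1)) := by
    rw [div_eq_iff (rpow_pos_of_pos two_pos _).ne', ← rpow_add two_pos]
    nth_rewrite 1 [← rpow_one 2]
    rw [← rpow_add two_pos]
    ring_nf
  rw [thetaSeq, zeta_eq_rateRatio, zeta_eq_rateRatio, ← hscale]
  push_cast
  rw [show n + 1 + 1 = n + 2 by ring, show (n : ℝ) + 1 + 1 = n + 2 by ring]
  field_simp

theorem two_mul_zetaAsymp_succ_div (p : ℤ → ℝ) (n : ℤ) :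
    2 * KD.zetaAsymp p (n + 1) / KD.zetaAsymp p n =
      (2 : ℝ) ^ (KD.α - KD.β + 1) * (2 : ℝ) ^ (KD.α * (p (n + 1) - p n)) *
        (2 : ℝ) ^ (-(KD.β * (p (n + 2) - p (n + 1)))) := by
  simp only [zetaAsymp, rpow_def_of_pos two_pos]
  push_cast
  rw [show n + 1 + 1 = n + 2 by ring]
  field_simp
  rw [← exp_add, ← exp_add, ← exp_add, ← exp_add, mul_assoc, ← exp_add]
  conv_lhs => arg 1; rw [← exp_log two_pos]
  rw [← exp_add]
  ring_nf

theorem exists_abs_rateRatio_sub_le (d : ℝ) :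
    ∃ C > 0, ∀ s t, s ≤ d → t ≤ d →
      |KD.rateRatio s t - KD.k₀ / KD.γ₀| ≤ C * (2 ^ (KD.αb * s) + 2 ^ (KD.βb * t)) := by
  have hkc := KD.hkC2.continuousOn.mono (Ioc_subset_Ioi_self : Ioc (0 : ℝ) (2 ^ d) ⊆ Ioi 0)
  have hγc := KD.hγC2.continuousOn.mono (Ioc_subset_Ioi_self : Ioc (0 : ℝ) (2 ^ d) ⊆ Ioi 0)
  obtain ⟨Ck, hCk, hk⟩ := exists_abs_sub_le_mul_rpow (zero_le_one.trans KD.hαb.le) hkc KD.hkZero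
  obtain ⟨Cγ, hCγ, hγ⟩ := exists_abs_sub_le_mul_rpow (zero_le_one.trans KD.hβb.le) hγc KD.hγZero
  obtain ⟨cγ, hcγ, hγlow⟩ := exists_pos_le_of_tendsto KD.hγ₀ hγc (fun ξ hξ => KD.hγpos ξ hξ.1)
    (tendsto_nhdsGT_of_isBigO_rpow (one_pos.trans KD.hβb) KD.hγZero)
  refine ⟨(Ck + KD.k₀ / KD.γ₀ * Cγ) / cγ, by have := KD.hk₀; have := KD.hγ₀; positivity,
    fun s t hs ht => ?_⟩
  have hbound := abs_div_sub_div_le KD.hγ₀ hcγ (hγlow _ (two_rpow_mem_Ioc ht))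
    (hk _ (two_rpow_mem_Ioc hs)) (hγ _ (two_rpow_mem_Ioc ht))
  rw [← rpow_mul zero_le_two, ← rpow_mul zero_le_two, abs_of_pos KD.hk₀, mul_comm s,
    mul_comm t] at hbound
  calc _ ≤ _ := hbound
    _ ≤ (Ck + KD.k₀ / KD.γ₀ * Cγ) * (2 ^ (KD.αb * s) + 2 ^ (KD.βb * t)) / cγ := by
        gcongr
        have := KD.hk₀; have := KD.hγ₀
        nlinarith [rpow_pos_of_pos two_pos (KD.αb * s), rpow_pos_of_pos two_pos (KD.βb * t),
          mul_pos (div_pos KD.hk₀ KD.hγ₀) hCγ]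
    _ = _ := div_mul_eq_mul_div _ _ _ |>.symm

theorem exists_pos_le_rateRatio (d : ℝ) : ∃ c > 0, ∀ s t, s ≤ d → t ≤ d → c ≤ KD.rateRatio s t := by
  have hkc := KD.hkC2.continuousOn.mono (Ioc_subset_Ioi_self : Ioc (0 : ℝ) (2 ^ d) ⊆ Ioi 0)
  have hγc := KD.hγC2.continuousOn.mono (Ioc_subset_Ioi_self : Ioc (0 : ℝ) (2 ^ d) ⊆ Ioi 0)
  obtain ⟨ck, hck, hklow⟩ := exists_pos_le_of_tendsto KD.hk₀ hkc (fun ξ hξ => KD.hkpos ξ hξ.1)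
    (tendsto_nhdsGT_of_isBigO_rpow (one_pos.trans KD.hαb) KD.hkZero)
  obtain ⟨cγ, hcγ, hγup⟩ := exists_pos_le_of_tendsto (inv_pos.mpr KD.hγ₀)
    (hγc.inv₀ fun ξ hξ => (KD.hγpos ξ hξ.1).ne') (fun ξ hξ => inv_pos.mpr (KD.hγpos ξ hξ.1))
    ((tendsto_nhdsGT_of_isBigO_rpow (one_pos.trans KD.hβb) KD.hγZero).inv₀ KD.hγ₀.ne')
  refine ⟨ck * cγ, mul_pos hck hcγ, fun s t hs ht => ?_⟩
  rw [rateRatio, div_eq_mul_inv]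
  exact mul_le_mul (hklow _ (two_rpow_mem_Ioc hs)) (hγup _ (two_rpow_mem_Ioc ht)) hcγ.le
    (KD.hkpos _ (two_rpow_mem_Ioc hs).1).le

theorem exists_abs_rateRatio_sub_le_of_nonpos (d : ℝ) :
    ∃ C > 0, ∀ n : ℝ, n ≤ 0 → ∀ s t, s ≤ n + d → t ≤ n + d →
      |KD.rateRatio s t - KD.k₀ / KD.γ₀| ≤ C * 2 ^ (min KD.αb KD.βb * n) := by
  obtain ⟨C, hC, hR⟩ := KD.exists_abs_rateRatio_sub_le d
  have hαb : 0 ≤ KD.αb := zero_le_one.trans KD.hαb.le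
  have hβb : 0 ≤ KD.βb := zero_le_one.trans KD.hβb.le
  refine ⟨C * (2 ^ (KD.αb * d) + 2 ^ (KD.βb * d)), by positivity, fun n hn s t hs ht => ?_⟩
  refine (hR s t (by linarith) (by linarith)).trans ?_
  rw [mul_assoc, add_mul]
  gcongr
  exacts [two_rpow_mul_le (min_le_left _ _) hαb hn hs, two_rpow_mul_le (min_le_right _ _) hβb hn ht]

theorem exists_abs_zeta_sub_le (δ₀ : ℝ) :
    ∃ C : ℝ, 0 < C ∧ ∀ p : ℤ → ℝ, (∀ n, |p n| ≤ δ₀) → ∀ n : ℤ, n ≤ 0 →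
      |KD.zeta p n - KD.k₀ * Real.log 2 / KD.γ₀ * (2:ℝ) ^ (-((n:ℝ) + p n))| ≤
        C * (2:ℝ) ^ ((min KD.αb KD.βb - 1) * (n:ℝ)) := by
  obtain ⟨C, hC, hR⟩ := KD.exists_abs_rateRatio_sub_le_of_nonpos (δ₀ + 1)
  have hL : 0 < Real.log 2 := log_pos one_lt_two
  refine ⟨Real.log 2 * C * 2 ^ δ₀, by positivity, fun p hp n hn => ?_⟩
  have hn' : (n : ℝ) ≤ 0 := by exact_mod_cast hn
  obtain ⟨hpn, hpn'⟩ := abs_le.mp (hp n)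
  have hpn1 := (abs_le.mp (hp (n + 1))).2
  have hscale : (2 : ℝ) ^ (-((n : ℝ) + p n)) * 2 ^ (min KD.αb KD.βb * n) ≤
      2 ^ δ₀ * 2 ^ ((min KD.αb KD.βb - 1) * n) := by
    rw [← rpow_add two_pos, ← rpow_add two_pos]
    exact rpow_le_rpow_of_exponent_le one_le_two (by linarith)
  have hsplit : KD.zeta p n - KD.k₀ * Real.log 2 / KD.γ₀ * (2:ℝ) ^ (-((n:ℝ) + p n)) =
      Real.log 2 * 2 ^ (-((n : ℝ) + p n)) *
        (KD.rateRatio ((n : ℝ) + p n) ((n : ℝ) + 1 + p (n + 1)) - KD.k₀ / KD.γ₀) := by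
    rw [zeta_eq_rateRatio]; ring
  calc |KD.zeta p n - KD.k₀ * Real.log 2 / KD.γ₀ * (2:ℝ) ^ (-((n:ℝ) + p n))|
      = Real.log 2 * 2 ^ (-((n : ℝ) + p n)) *
          |KD.rateRatio ((n : ℝ) + p n) ((n : ℝ) + 1 + p (n + 1)) - KD.k₀ / KD.γ₀| := by
        rw [hsplit, abs_mul, abs_of_pos (by positivity)]
    _ ≤ Real.log 2 * 2 ^ (-((n : ℝ) + p n)) * (C * 2 ^ (min KD.αb KD.βb * n)) := by
        gcongr
        exact hR n hn' _ _ (by linarith) (by linarith)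
    _ = Real.log 2 * C * (2 ^ (-((n : ℝ) + p n)) * 2 ^ (min KD.αb KD.βb * n)) := by ring
    _ ≤ Real.log 2 * C * (2 ^ δ₀ * 2 ^ ((min KD.αb KD.βb - 1) * n)) := by gcongr
    _ = Real.log 2 * C * 2 ^ δ₀ * 2 ^ ((min KD.αb KD.βb - 1) * n) := by ring

theorem exists_abs_thetaSeq_sub_le (δ₀ : ℝ) :
    ∃ C : ℝ, 0 < C ∧ ∀ p : ℤ → ℝ, (∀ n, |p n| ≤ δ₀) → ∀ n : ℤ, n ≤ 0 →
      |KD.thetaSeq p n - (2:ℝ) ^ (p n - p (n + 1))| ≤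
        C * (2:ℝ) ^ (min KD.αb KD.βb * (n:ℝ)) := by
  obtain ⟨C, hC, hR⟩ := KD.exists_abs_rateRatio_sub_le_of_nonpos (δ₀ + 2)
  obtain ⟨c, hc, hRlow⟩ := KD.exists_pos_le_rateRatio (δ₀ + 2)
  refine ⟨2 ^ (2 * δ₀) * (2 * C) / c, by positivity, fun p hp n hn => ?_⟩
  have hn' : (n : ℝ) ≤ 0 := by exact_mod_cast hn
  have hp0 := (abs_le.mp (hp n)).2
  obtain ⟨hp1, hp1'⟩ := abs_le.mp (hp (n + 1))
  have hp2 := (abs_le.mp (hp (n + 2))).2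
  have hθ := KD.thetaSeq_eq_rateRatio p n
  set R₀ := KD.rateRatio ((n : ℝ) + p n) ((n : ℝ) + 1 + p (n + 1))
  set R₁ := KD.rateRatio ((n : ℝ) + 1 + p (n + 1)) ((n : ℝ) + 2 + p (n + 2))
  have hR₀ : c ≤ R₀ := hRlow _ _ (by linarith) (by linarith)
  have hR₁₀ : |R₁ - R₀| ≤ 2 * C * 2 ^ (min KD.αb KD.βb * n) := by
    calc |R₁ - R₀| ≤ |R₁ - KD.k₀ / KD.γ₀| + |R₀ - KD.k₀ / KD.γ₀| := by
          rw [abs_sub_comm R₀]; exact abs_sub_le _ _ _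
      _ ≤ _ := by
        linarith [hR n hn' ((n : ℝ) + p n) ((n : ℝ) + 1 + p (n + 1)) (by linarith) (by linarith),
          hR n hn' ((n : ℝ) + 1 + p (n + 1)) ((n : ℝ) + 2 + p (n + 2)) (by linarith) (by linarith)]
  have hshift : (2 : ℝ) ^ (p n - p (n + 1)) ≤ 2 ^ (2 * δ₀) :=
    rpow_le_rpow_of_exponent_le one_le_two (by linarith)
  have hsplit : KD.thetaSeq p n - (2:ℝ) ^ (p n - p (n + 1)) =
      2 ^ (p n - p (n + 1)) * (R₁ - R₀) / R₀ := by
    rw [hθ]; field_simp [(hc.trans_le hR₀).ne']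
  calc |KD.thetaSeq p n - (2:ℝ) ^ (p n - p (n + 1))|
      = 2 ^ (p n - p (n + 1)) * |R₁ - R₀| / R₀ := by
        rw [hsplit, abs_div, abs_mul, abs_of_pos (hc.trans_le hR₀), abs_of_pos (by positivity)]
    _ ≤ 2 ^ (2 * δ₀) * (2 * C * 2 ^ (min KD.αb KD.βb * n)) / c := by gcongr
    _ = 2 ^ (2 * δ₀) * (2 * C) / c * 2 ^ (min KD.αb KD.βb * n) := by ring

theorem tendsto_rpow_div_γ_atTop : Tendsto (fun ξ => ξ ^ KD.β / KD.γ ξ) atTop (𝓝 1) := by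
  simpa using (tendsto_div_rpow_of_isBigO_s4 KD.hβt KD.hγInfty).inv₀ one_ne_zero

theorem zeta_div_zetaAsymp (p : ℤ → ℝ) (n : ℤ) :
    KD.zeta p n / KD.zetaAsymp p n =
      KD.k (2 ^ ((n : ℝ) + p n)) / (2 ^ ((n : ℝ) + p n)) ^ (KD.α + 1) *
        ((2 ^ ((n : ℝ) + 1 + p (n + 1))) ^ KD.β / KD.γ (2 ^ ((n : ℝ) + 1 + p (n + 1)))) := by
  rw [zeta, zetaAsymp, ← rpow_mul zero_le_two, ← rpow_mul zero_le_two, rpow_neg zero_le_two,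
    rpow_neg zero_le_two, mul_add_one, rpow_add two_pos (_ * KD.α), mul_comm _ KD.α,
    mul_comm _ KD.β]
  field_simp

theorem tendsto_zeta_div_zetaAsymp (δ₀ : ℝ) :
    Tendsto (fun q : ℤ × (ℤ → ℝ) => KD.zeta q.2 q.1 / KD.zetaAsymp q.2 q.1)
      (atTopUniform δ₀) (𝓝 1) := by
  have hx := (tendsto_rpow_atTop_of_base_gt_one 2 one_lt_two).comp
    (tendsto_add_apply_atTopUniform δ₀)
  have hy := (tendsto_rpow_atTop_of_base_gt_one 2 one_lt_two).comp
    (tendsto_add_one_add_apply_atTopUniform δ₀)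
  have h := (KD.hkInfty.comp hx).mul (KD.tendsto_rpow_div_γ_atTop.comp hy)
  rw [mul_one] at h
  exact h.congr fun q => (KD.zeta_div_zetaAsymp q.2 q.1).symm

theorem tendsto_thetaSeq_div (δ₀ : ℝ) :
    Tendsto (fun q : ℤ × (ℤ → ℝ) =>
        KD.thetaSeq q.2 q.1 / (2 * KD.zetaAsymp q.2 (q.1 + 1) / KD.zetaAsymp q.2 q.1))
      (atTopUniform δ₀) (𝓝 1) := by
  have h := KD.tendsto_zeta_div_zetaAsymp δ₀
  have hdiv := (h.comp (tendsto_succ_atTopUniform δ₀)).div h one_ne_zero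
  rw [div_one] at hdiv
  refine hdiv.congr fun q => ?_
  simp only [Pi.div_apply, Function.comp_apply, thetaSeq]
  ring

end Kernels

theorem zeta_theta_asymptotics_general (KD : Kernels) (δ₀ : ℝ) :
    (∃ C : ℝ, 0 < C ∧ ∀ p : ℤ → ℝ, (∀ n, |p n| ≤ δ₀) → ∀ n : ℤ, n ≤ 0 →
      |KD.zeta p n - KD.k₀ * Real.log 2 / KD.γ₀ * (2:ℝ) ^ (-((n:ℝ) + p n))| ≤
        C * (2:ℝ) ^ ((min KD.αb KD.βb - 1) * (n:ℝ))) ∧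
    (∀ ε : ℝ, 0 < ε → ∃ N : ℤ, ∀ p : ℤ → ℝ, (∀ n, |p n| ≤ δ₀) → ∀ n : ℤ, N ≤ n →
      |KD.zeta p n / (Real.log 2 * (2:ℝ) ^ (KD.α * ((n:ℝ) + p n)) *
          (2:ℝ) ^ (-(KD.β * ((n:ℝ) + 1 + p (n + 1))))) - 1| ≤ ε) ∧
    (∃ C : ℝ, 0 < C ∧ ∀ p : ℤ → ℝ, (∀ n, |p n| ≤ δ₀) → ∀ n : ℤ, n ≤ 0 →
      |KD.thetaSeq p n - (2:ℝ) ^ (p n - p (n + 1))| ≤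
        C * (2:ℝ) ^ (min KD.αb KD.βb * (n:ℝ))) ∧
    (∀ ε : ℝ, 0 < ε → ∃ N : ℤ, ∀ p : ℤ → ℝ, (∀ n, |p n| ≤ δ₀) → ∀ n : ℤ, N ≤ n →
      |KD.thetaSeq p n / ((2:ℝ) ^ (KD.α - KD.β + 1) *
          (2:ℝ) ^ (KD.α * (p (n + 1) - p n)) *
          (2:ℝ) ^ (-(KD.β * (p (n + 2) - p (n + 1))))) - 1| ≤ ε) := by
  refine ⟨KD.exists_abs_zeta_sub_le δ₀, fun ε hε => ?_, KD.exists_abs_thetaSeq_sub_le δ₀,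
    fun ε hε => ?_⟩
  · obtain ⟨N, hN⟩ := exists_forall_abs_sub_le_of_tendsto (KD.tendsto_zeta_div_zetaAsymp δ₀) hε
    exact ⟨N, fun p hp n hn => hN p hp n hn⟩
  · obtain ⟨N, hN⟩ := exists_forall_abs_sub_le_of_tendsto (KD.tendsto_thetaSeq_div δ₀) hε
    exact ⟨N, fun p hp n hn => by simpa only [KD.two_mul_zetaAsymp_succ_div] using hN p hp n hn⟩

/-- asymptotic behaviour of `ζ_n(p)` and `θ_n(p)` as `n → ±∞`,
uniformly over shift sequences `p` with `|p_n| ≤ δ₀`. -/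
theorem zeta_theta_asymptotics (KD : Kernels) (δ₀ : ℝ) (hδ : 0 < δ₀ ∧ δ₀ < 1) :
    (∃ C : ℝ, 0 < C ∧ ∀ p : ℤ → ℝ, (∀ n, |p n| ≤ δ₀) → ∀ n : ℤ, n ≤ 0 →
      |KD.zeta p n - KD.k₀ * Real.log 2 / KD.γ₀ * (2:ℝ) ^ (-((n:ℝ) + p n))| ≤
        C * (2:ℝ) ^ ((min KD.αb KD.βb - 1) * (n:ℝ))) ∧
    (∀ ε : ℝ, 0 < ε → ∃ N : ℤ, ∀ p : ℤ → ℝ, (∀ n, |p n| ≤ δ₀) → ∀ n : ℤ, N ≤ n →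
      |KD.zeta p n / (Real.log 2 * (2:ℝ) ^ (KD.α * ((n:ℝ) + p n)) *
          (2:ℝ) ^ (-(KD.β * ((n:ℝ) + 1 + p (n + 1))))) - 1| ≤ ε) ∧
    (∃ C : ℝ, 0 < C ∧ ∀ p : ℤ → ℝ, (∀ n, |p n| ≤ δ₀) → ∀ n : ℤ, n ≤ 0 →
      |KD.thetaSeq p n - (2:ℝ) ^ (p n - p (n + 1))| ≤
        C * (2:ℝ) ^ (min KD.αb KD.βb * (n:ℝ))) ∧
    (∀ ε : ℝ, 0 < ε → ∃ N : ℤ, ∀ p : ℤ → ℝ, (∀ n, |p n| ≤ δ₀) → ∀ n : ℤ, N ≤ n →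
      |KD.thetaSeq p n / ((2:ℝ) ^ (KD.α - KD.β + 1) *
          (2:ℝ) ^ (KD.α * (p (n + 1) - p n)) *
          (2:ℝ) ^ (-(KD.β * (p (n + 2) - p (n + 1))))) - 1| ≤ ε) :=
  zeta_theta_asymptotics_general KD δ₀
end
end
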